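/- arXiv:2310.10117 — 9 statements merged into one kernel-verified Lean document; each statement's English description precedes it below -/
import Mathlib

section
/- Let r > 0, c > 0 and q ∈ (0,1), and let (a_t)_{t≥0} be a sequence of nonnegative real numbers satisfying (1 + r)·a_{t+1} ≤ a_t + c·q^{2t} for all t ≥ 0. Then for every t ≥ 0, a_{t+1} ≤ (max{q, 1/(1+r)})^{t+1} · (a_0 + c/(1 − q)). -/
/-!
Dividing the recurrence by `1 + r` and bounding `1 / (1 + r)` by `ρ = max q (1/(1+r))` gives
`a_{t+1} ≤ ρ (a_t + c q^{2t})`, and since `q ≤ ρ` the forcing term satisfies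
`c q^{2t} ≤ ρ^t · c q^t`. Unrolling yields `a_t ≤ ρ^t (a_0 + c ∑_{i<t} q^i)`, and the geometric
sum is at most `1/(1-q)`.
-/

open Finset

theorem le_pow_mul_add_sum_of_le_mul {ρ : ℝ} (hρ : 0 ≤ ρ) {a b : ℕ → ℝ}
    (h : ∀ t, a (t + 1) ≤ ρ * (a t + ρ ^ t * b t)) (t : ℕ) :
    a t ≤ ρ ^ t * (a 0 + ∑ i ∈ range t, b i) := by
  induction t with
  | zero => simp
  | succ t ih =>
    calc a (t + 1) ≤ ρ * (a t + ρ ^ t * b t) := h t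
      _ ≤ ρ * (ρ ^ t * (a 0 + ∑ i ∈ range t, b i) + ρ ^ t * b t) := by gcongr
      _ = ρ ^ (t + 1) * (a 0 + ∑ i ∈ range (t + 1), b i) := by rw [sum_range_succ]; ring

theorem le_mul_of_one_add_mul_le {r ρ x y : ℝ} (hr : 0 < 1 + r) (hρ : 1 / (1 + r) ≤ ρ)
    (hx : 0 ≤ x) (h : (1 + r) * x ≤ y) : x ≤ ρ * y := by
  have hy : 0 ≤ y := (mul_nonneg hr.le hx).trans h
  calc x ≤ 1 / (1 + r) * y := by rw [one_div_mul_eq_div, le_div_iff₀ hr, mul_comm]; exact h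
    _ ≤ ρ * y := by gcongr

theorem mul_pow_two_mul_le {c q ρ : ℝ} (hc : 0 ≤ c) (hq : 0 ≤ q) (hqρ : q ≤ ρ) (t : ℕ) :
    c * q ^ (2 * t) ≤ ρ ^ t * (c * q ^ t) := by
  have hpow : q ^ t ≤ ρ ^ t := pow_le_pow_left₀ hq hqρ t
  calc c * q ^ (2 * t) = q ^ t * (c * q ^ t) := by ring
    _ ≤ ρ ^ t * (c * q ^ t) := by gcongr

theorem geom_sum_range_le_of_lt_one {q : ℝ} (hq0 : 0 ≤ q) (hq1 : q < 1) (n : ℕ) :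
    ∑ i ∈ range n, q ^ i ≤ 1 / (1 - q) := by
  simpa only [pow_zero, ← range_eq_Ico] using
    geom_sum_Ico_le_of_lt_one (m := 0) (n := n) hq0 hq1

/-- Lemma B.1 (auxiliary recurrence): if `(1+r) a_{t+1} ≤ a_t + c q^{2t}` for all `t`,
with `r, c > 0` and `q ∈ (0,1)`, then
`a_{t+1} ≤ (max {q, 1/(1+r)})^{t+1} (a_0 + c/(1-q))`. -/
theorem stmt_0 (r c q : ℝ) (hr : 0 < r) (hc : 0 < c) (hq0 : 0 < q) (hq1 : q < 1)
    (a : ℕ → ℝ) (ha : ∀ t, 0 ≤ a t)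
    (hrec : ∀ t : ℕ, (1 + r) * a (t + 1) ≤ a t + c * q ^ (2 * t)) :
    ∀ t : ℕ, a (t + 1) ≤ (max q (1 / (1 + r))) ^ (t + 1) * (a 0 + c / (1 - q)) := by
  intro t
  set ρ := max q (1 / (1 + r))
  have hρ : 0 ≤ ρ := hq0.le.trans (le_max_left _ _)
  have hstep : ∀ t, a (t + 1) ≤ ρ * (a t + ρ ^ t * (c * q ^ t)) := fun t =>
    calc a (t + 1) ≤ ρ * (a t + c * q ^ (2 * t)) :=
          le_mul_of_one_add_mul_le (by linarith) (le_max_right _ _) (ha _) (hrec t)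
      _ ≤ ρ * (a t + ρ ^ t * (c * q ^ t)) := by
          gcongr ρ * (a t + ?_)
          exact mul_pow_two_mul_le hc.le hq0.le (le_max_left _ _) t
  calc a (t + 1) ≤ ρ ^ (t + 1) * (a 0 + ∑ i ∈ range (t + 1), c * q ^ i) :=
        le_pow_mul_add_sum_of_le_mul hρ hstep (t + 1)
    _ ≤ ρ ^ (t + 1) * (a 0 + c / (1 - q)) := by
        rw [← mul_sum, ← mul_one_div c]
        gcongr
        exact geom_sum_range_le_of_lt_one hq0.le hq1 _
end

section
/- Let H be a real inner product space, J : H → H firmly nonexpansive with fixed point z*, and let β > 0, s̄ > 0, n ≥ 1 a natural number. Let (z^k)_{k≥0} be a sequence in H with ‖z^{k+1} − J(z^k)‖ ≤ β·√n·s̄/(k+1)² for all k ≥ 0. Then for every k ≥ 0, each of ‖z^k − z*‖, ‖J(z^k) − z*‖ and ‖z^k − J(z^k)‖ is at most ‖z^0 − z*‖ + 2√n·s̄·β. -/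
/-!
Because `z*` is fixed, firm nonexpansiveness at the pair `(x, z*)` reads
`‖J x - z*‖² + ‖x - J x‖² ≤ ‖x - z*‖²`, so both `J x - z*` and `x - J x` are no longer than
`x - z*`. Hence the distance to `z*` grows by at most the error `‖z^{k+1} - J z^k‖` per step,
and these errors sum to at most `2 β √n s̄` since `∑ 1/(j+1)² ≤ 2`.
-/

open Finset

theorem sum_range_inv_succ_sq_le_two (k : ℕ) :
    ∑ j ∈ range k, (((j : ℝ) + 1) ^ 2)⁻¹ ≤ 2 := by
  have h := sum_Ioo_inv_sq_le (α := ℝ) 0 (k + 1)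
  rw [← Finset.Ico_add_one_left_eq_Ioo, sum_Ico_eq_sum_range] at h
  simpa [add_comm] using h

theorem dist_le_add_sum_of_dist_succ_le {X : Type*} [PseudoMetricSpace X] {T : X → X} {x₀ : X}
    (hT : ∀ x, dist (T x) x₀ ≤ dist x x₀) {z : ℕ → X} {ε : ℕ → ℝ}
    (hz : ∀ k, dist (z (k + 1)) (T (z k)) ≤ ε k) (k : ℕ) :
    dist (z k) x₀ ≤ dist (z 0) x₀ + ∑ j ∈ range k, ε j := by
  induction k with
  | zero => simp
  | succ k ih =>
    calc dist (z (k + 1)) x₀ ≤ dist (z (k + 1)) (T (z k)) + dist (T (z k)) x₀ := dist_triangle _ _ _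
      _ ≤ ε k + dist (z k) x₀ := add_le_add (hz k) (hT _)
      _ ≤ dist (z 0) x₀ + ∑ j ∈ range (k + 1), ε j := by rw [sum_range_succ]; linarith

section FirmlyNonexpansive

variable {E : Type*} [SeminormedAddCommGroup E] {J : E → E} {z : E}

theorem norm_apply_sub_fixedPoint_le
    (hJ : ∀ x y, ‖J x - J y‖ ^ 2 + ‖(x - J x) - (y - J y)‖ ^ 2 ≤ ‖x - y‖ ^ 2)
    (hz : J z = z) (x : E) : ‖J x - z‖ ≤ ‖x - z‖ := by
  have h := hJ x z
  rw [hz, sub_self, sub_zero] at h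
  exact (pow_le_pow_iff_left₀ (norm_nonneg _) (norm_nonneg _) two_ne_zero).1
    (le_of_add_le_of_nonneg_left h (sq_nonneg _))

theorem norm_sub_apply_le_norm_sub_fixedPoint
    (hJ : ∀ x y, ‖J x - J y‖ ^ 2 + ‖(x - J x) - (y - J y)‖ ^ 2 ≤ ‖x - y‖ ^ 2)
    (hz : J z = z) (x : E) : ‖x - J x‖ ≤ ‖x - z‖ := by
  have h := hJ x z
  rw [hz, sub_self, sub_zero] at h
  exact (pow_le_pow_iff_left₀ (norm_nonneg _) (norm_nonneg _) two_ne_zero).1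
    (le_of_add_le_of_nonneg_right h (sq_nonneg _))

end FirmlyNonexpansive

theorem stmt_2_general {H : Type*} [NormedAddCommGroup H]
    (J : H → H)
    (hJ : ∀ x y : H, ‖J x - J y‖ ^ 2 + ‖(x - J x) - (y - J y)‖ ^ 2 ≤ ‖x - y‖ ^ 2)
    (zstar : H) (hfix : J zstar = zstar)
    (β sbar : ℝ) (n : ℕ)
    (z : ℕ → H)
    (hz : ∀ k : ℕ, ‖z (k + 1) - J (z k)‖ ≤ β * Real.sqrt n * sbar / ((k : ℝ) + 1) ^ 2) :
    ∀ k : ℕ,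
      ‖z k - zstar‖ ≤ ‖z 0 - zstar‖ + 2 * Real.sqrt n * sbar * β ∧
      ‖J (z k) - zstar‖ ≤ ‖z 0 - zstar‖ + 2 * Real.sqrt n * sbar * β ∧
      ‖z k - J (z k)‖ ≤ ‖z 0 - zstar‖ + 2 * Real.sqrt n * sbar * β := by
  set c := β * Real.sqrt n * sbar
  have hc : 0 ≤ c := by simpa using (norm_nonneg _).trans (hz 0)
  have hbound (k : ℕ) : ‖z k - zstar‖ ≤ ‖z 0 - zstar‖ + 2 * Real.sqrt n * sbar * β := by
    have h := dist_le_add_sum_of_dist_succ_le (T := J)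
      (by simpa only [dist_eq_norm] using norm_apply_sub_fixedPoint_le hJ hfix)
      (by simpa only [dist_eq_norm] using hz) k
    simp only [dist_eq_norm, div_eq_mul_inv, ← mul_sum] at h
    have hsum := mul_le_mul_of_nonneg_left (sum_range_inv_succ_sq_le_two k) hc
    linarith
  exact fun k => ⟨hbound k, (norm_apply_sub_fixedPoint_le hJ hfix _).trans (hbound k),
    (norm_sub_apply_le_norm_sub_fixedPoint hJ hfix _).trans (hbound k)⟩

/-- Lemma 3.1 (bounded iterates), abstract form: for a firmly nonexpansive `J` with fixed
point `z*` and iterates with `‖z^{k+1} − J z^k‖ ≤ β √n s̄/(k+1)²`, each of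
`‖z^k − z*‖`, `‖J z^k − z*‖`, `‖z^k − J z^k‖` is at most `‖z^0 − z*‖ + 2√n s̄ β`. -/
theorem stmt_2 {H : Type*} [NormedAddCommGroup H] [InnerProductSpace ℝ H]
    (J : H → H)
    (hJ : ∀ x y : H, ‖J x - J y‖ ^ 2 + ‖(x - J x) - (y - J y)‖ ^ 2 ≤ ‖x - y‖ ^ 2)
    (zstar : H) (hfix : J zstar = zstar)
    (β sbar : ℝ) (hβ : 0 < β) (hsbar : 0 < sbar) (n : ℕ) (hn : 1 ≤ n)
    (z : ℕ → H)
    (hz : ∀ k : ℕ, ‖z (k + 1) - J (z k)‖ ≤ β * Real.sqrt n * sbar / ((k : ℝ) + 1) ^ 2) :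
    ∀ k : ℕ,
      ‖z k - zstar‖ ≤ ‖z 0 - zstar‖ + 2 * Real.sqrt n * sbar * β ∧
      ‖J (z k) - zstar‖ ≤ ‖z 0 - zstar‖ + 2 * Real.sqrt n * sbar * β ∧
      ‖z k - J (z k)‖ ≤ ‖z 0 - zstar‖ + 2 * Real.sqrt n * sbar * β :=
  stmt_2_general J hJ zstar hfix β sbar n z hz
end

section
/- Let H be a real inner product space, J : H → H firmly nonexpansive with a fixed point z*, (e_k)_{k≥0} nonnegative reals, and (z^k)_{k≥0} a sequence in H with ‖z^{k+1} − J(z^k)‖ ≤ e_k for all k ≥ 0. Then for every integer K ≥ 1, min over k with K ≤ k ≤ 2K of ‖z^{k+1} − z^k‖ is at most √2 · (‖z^0 − z*‖ + 2 Σ_{k=0}^{2K} e_k) / √(K+1). -/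
/-!
With `a k = ‖z k - z*‖`, firm nonexpansiveness at the pair `(z k, z*)` bounds both
`‖J (z k) - z*‖` and `‖z k - J (z k)‖` by `a k`; perturbing by at most `e k` gives
`‖z (k+1) - z k‖² + a (k+1)² ≤ a k² + 4 e k a k + 2 e k²`. Telescoping, and using
`a k ≤ a 0 + ∑ e`, the squared steps have total mass at most `2 (a 0 + 2 ∑ e)²`,
so the smallest of the `K + 1` steps with index in `[K, 2K]` has square at most
that mass divided by `K + 1`.
-/

open Finset

def FirmlyNonexpansive {H : Type*} [SeminormedAddCommGroup H] (J : H → H) : Prop :=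
  ∀ x y : H, ‖J x - J y‖ ^ 2 + ‖(x - J x) - (y - J y)‖ ^ 2 ≤ ‖x - y‖ ^ 2

namespace FirmlyNonexpansive

variable {H : Type*} [SeminormedAddCommGroup H] {J : H → H} {p : H}

theorem sq_norm_sub_fixedPoint_add_sq_norm_sub_le (hJ : FirmlyNonexpansive J) (hp : J p = p)
    (x : H) : ‖J x - p‖ ^ 2 + ‖x - J x‖ ^ 2 ≤ ‖x - p‖ ^ 2 := by
  simpa [hp] using hJ x p

theorem norm_sub_fixedPoint_le (hJ : FirmlyNonexpansive J) (hp : J p = p) (x : H) :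
    ‖J x - p‖ ≤ ‖x - p‖ :=
  (sq_le_sq₀ (norm_nonneg _) (norm_nonneg _)).mp <|
    le_of_add_le_of_nonneg_left (hJ.sq_norm_sub_fixedPoint_add_sq_norm_sub_le hp x) (sq_nonneg _)

theorem norm_sub_apply_le (hJ : FirmlyNonexpansive J) (hp : J p = p) (x : H) :
    ‖x - J x‖ ≤ ‖x - p‖ :=
  (sq_le_sq₀ (norm_nonneg _) (norm_nonneg _)).mp <|
    le_of_add_le_of_nonneg_right (hJ.sq_norm_sub_fixedPoint_add_sq_norm_sub_le hp x) (sq_nonneg _)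

variable {z : ℕ → H} {e : ℕ → ℝ}

theorem norm_succ_sub_fixedPoint_le (hJ : FirmlyNonexpansive J) (hp : J p = p)
    (hz : ∀ k, ‖z (k + 1) - J (z k)‖ ≤ e k) (k : ℕ) :
    ‖z (k + 1) - p‖ ≤ ‖z k - p‖ + e k :=
  calc ‖z (k + 1) - p‖ ≤ ‖z (k + 1) - J (z k)‖ + ‖J (z k) - p‖ :=
        norm_sub_le_norm_sub_add_norm_sub _ _ _
    _ ≤ e k + ‖z k - p‖ := add_le_add (hz k) (hJ.norm_sub_fixedPoint_le hp _)
    _ = ‖z k - p‖ + e k := add_comm _ _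

theorem norm_sub_fixedPoint_le_add_sum (hJ : FirmlyNonexpansive J) (hp : J p = p)
    (hz : ∀ k, ‖z (k + 1) - J (z k)‖ ≤ e k) (n : ℕ) :
    ‖z n - p‖ ≤ ‖z 0 - p‖ + ∑ k ∈ range n, e k := by
  induction n with
  | zero => simp
  | succ n ih =>
    rw [sum_range_succ]
    linarith [hJ.norm_succ_sub_fixedPoint_le hp hz n]

theorem sq_norm_succ_sub_add_sq_norm_sub_fixedPoint_le (hJ : FirmlyNonexpansive J)
    (hp : J p = p) (hz : ∀ k, ‖z (k + 1) - J (z k)‖ ≤ e k) (k : ℕ) :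
    ‖z (k + 1) - z k‖ ^ 2 + ‖z (k + 1) - p‖ ^ 2 ≤
      ‖z k - p‖ ^ 2 + 4 * e k * ‖z k - p‖ + 2 * e k ^ 2 := by
  have he : 0 ≤ e k := (norm_nonneg _).trans (hz k)
  have hstep : ‖z (k + 1) - z k‖ ≤ e k + ‖z k - J (z k)‖ :=
    calc ‖z (k + 1) - z k‖ ≤ ‖z (k + 1) - J (z k)‖ + ‖J (z k) - z k‖ :=
          norm_sub_le_norm_sub_add_norm_sub _ _ _
      _ ≤ e k + ‖z k - J (z k)‖ := by rw [norm_sub_rev (J (z k))]; gcongr; exact hz k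
  have hdist : ‖z (k + 1) - p‖ ≤ e k + ‖J (z k) - p‖ :=
    calc ‖z (k + 1) - p‖ ≤ ‖z (k + 1) - J (z k)‖ + ‖J (z k) - p‖ :=
          norm_sub_le_norm_sub_add_norm_sub _ _ _
      _ ≤ e k + ‖J (z k) - p‖ := by gcongr; exact hz k
  have hsq := hJ.sq_norm_sub_fixedPoint_add_sq_norm_sub_le hp (z k)
  have hb := hJ.norm_sub_apply_le hp (z k)
  have hc := hJ.norm_sub_fixedPoint_le hp (z k)
  nlinarith [pow_le_pow_left₀ (norm_nonneg _) hstep 2,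
    pow_le_pow_left₀ (norm_nonneg _) hdist 2,
    mul_le_mul_of_nonneg_left hb he, mul_le_mul_of_nonneg_left hc he]

theorem sum_sq_norm_succ_sub_add_sq_norm_sub_fixedPoint_le (hJ : FirmlyNonexpansive J)
    (hp : J p = p) (hz : ∀ k, ‖z (k + 1) - J (z k)‖ ≤ e k) (n : ℕ) :
    ∑ k ∈ range n, ‖z (k + 1) - z k‖ ^ 2 + ‖z n - p‖ ^ 2 ≤
      2 * (‖z 0 - p‖ + 2 * ∑ k ∈ range n, e k) ^ 2 := by
  induction n with
  | zero =>
    simp only [range_zero, sum_empty, zero_add, mul_zero, add_zero]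
    nlinarith [norm_nonneg (z 0 - p)]
  | succ n ih =>
    have he : 0 ≤ e n := (norm_nonneg _).trans (hz n)
    have hE : 0 ≤ ∑ k ∈ range n, e k := sum_nonneg fun k _ => (norm_nonneg _).trans (hz k)
    have ha := hJ.norm_sub_fixedPoint_le_add_sum hp hz n
    rw [sum_range_succ, sum_range_succ]
    nlinarith [hJ.sq_norm_succ_sub_add_sq_norm_sub_fixedPoint_le hp hz n,
      mul_le_mul_of_nonneg_left ha he, norm_nonneg (z 0 - p)]

end FirmlyNonexpansive

theorem Finset.exists_mem_le_div_card {ι : Type*} {s : Finset ι} (hs : s.Nonempty)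
    {f : ι → ℝ} {M : ℝ} (hf : ∑ i ∈ s, f i ≤ M) : ∃ i ∈ s, f i ≤ M / #s :=
  exists_le_of_sum_le hs <| by
    rw [sum_const, nsmul_eq_mul, mul_div_cancel₀ _ (by exact_mod_cast hs.card_ne_zero)]
    exact hf

theorem stmt_3_general {H : Type*} [NormedAddCommGroup H]
    (J : H → H)
    (hJ : ∀ x y : H, ‖J x - J y‖ ^ 2 + ‖(x - J x) - (y - J y)‖ ^ 2 ≤ ‖x - y‖ ^ 2)
    (zstar : H) (hfix : J zstar = zstar)
    (e : ℕ → ℝ)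
    (z : ℕ → H) (hz : ∀ k : ℕ, ‖z (k + 1) - J (z k)‖ ≤ e k) :
    ∀ K : ℕ, 1 ≤ K →
      ∃ k : ℕ, K ≤ k ∧ k ≤ 2 * K ∧
        ‖z (k + 1) - z k‖ ≤
          Real.sqrt 2 * (‖z 0 - zstar‖ + 2 * ∑ j ∈ Finset.range (2 * K + 1), e j) /
            Real.sqrt ((K : ℝ) + 1) := by
  intro K _
  set B := ‖z 0 - zstar‖ + 2 * ∑ j ∈ range (2 * K + 1), e j
  have hB : 0 ≤ B := le_trans (norm_nonneg _) <| le_add_of_nonneg_right <|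
    mul_nonneg zero_le_two <| sum_nonneg fun k _ => (norm_nonneg _).trans (hz k)
  have hIcc : Icc K (2 * K) ⊆ range (2 * K + 1) := fun k hk => by
    simp only [mem_Icc, mem_range] at hk ⊢; omega
  have hmass : ∑ k ∈ Icc K (2 * K), ‖z (k + 1) - z k‖ ^ 2 ≤ 2 * B ^ 2 :=
    calc _ ≤ ∑ k ∈ range (2 * K + 1), ‖z (k + 1) - z k‖ ^ 2 :=
          sum_le_sum_of_subset_of_nonneg hIcc fun _ _ _ => sq_nonneg _
      _ ≤ 2 * B ^ 2 := le_of_add_le_of_nonneg_left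
          (FirmlyNonexpansive.sum_sq_norm_succ_sub_add_sq_norm_sub_fixedPoint_le hJ hfix hz _)
          (sq_nonneg _)
  obtain ⟨k, hk, hkle⟩ := exists_mem_le_div_card (nonempty_Icc.mpr (by omega)) hmass
  refine ⟨k, (mem_Icc.mp hk).1, (mem_Icc.mp hk).2, ?_⟩
  have hcard : ((#(Icc K (2 * K)) : ℕ) : ℝ) = (K : ℝ) + 1 := by
    rw [Nat.card_Icc]; push_cast [show 2 * K + 1 - K = K + 1 by omega]; ring
  rw [hcard] at hkle
  calc ‖z (k + 1) - z k‖ ≤ Real.sqrt (2 * B ^ 2 / ((K : ℝ) + 1)) :=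
        Real.le_sqrt_of_sq_le hkle
    _ = Real.sqrt 2 * B / Real.sqrt ((K : ℝ) + 1) := by
      rw [Real.sqrt_div (by positivity), Real.sqrt_mul zero_le_two, Real.sqrt_sq hB]

/-- Lemma A.3 (inexact PPA rate): for a firmly nonexpansive `J` with fixed point `z*`
and iterates `‖z^{k+1} − J z^k‖ ≤ e_k`, for every `K ≥ 1` the minimum of
`‖z^{k+1} − z^k‖` over `K ≤ k ≤ 2K` is at most
`√2 (‖z^0 − z*‖ + 2 Σ_{k=0}^{2K} e_k)/√(K+1)`. -/
theorem stmt_3 {H : Type*} [NormedAddCommGroup H] [InnerProductSpace ℝ H]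
    (J : H → H)
    (hJ : ∀ x y : H, ‖J x - J y‖ ^ 2 + ‖(x - J x) - (y - J y)‖ ^ 2 ≤ ‖x - y‖ ^ 2)
    (zstar : H) (hfix : J zstar = zstar)
    (e : ℕ → ℝ) (he : ∀ k, 0 ≤ e k)
    (z : ℕ → H) (hz : ∀ k : ℕ, ‖z (k + 1) - J (z k)‖ ≤ e k) :
    ∀ K : ℕ, 1 ≤ K →
      ∃ k : ℕ, K ≤ k ∧ k ≤ 2 * K ∧
        ‖z (k + 1) - z k‖ ≤
          Real.sqrt 2 * (‖z 0 - zstar‖ + 2 * ∑ j ∈ Finset.range (2 * K + 1), e j) /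
            Real.sqrt ((K : ℝ) + 1) :=
  stmt_3_general J hJ zstar hfix e z hz
end

section
/- Let f : ℝ^d → ℝ be convex and differentiable, let c_1, …, c_m : ℝ^d → ℝ be convex and differentiable, and let h : ℝ^d → ℝ be convex. Let β, τ, ε_1, ε_2 > 0, let w, w⁺ ∈ ℝ^d, and let μ ∈ ℝ^m with μ_j ≥ 0 for all j. Define μ⁺ ∈ ℝ^m by μ⁺_j = max(μ_j + β·c_j(w⁺), 0). Assume there exists a subgradient g of h at w⁺ such that ‖∇f(w⁺) + g + Σ_{j=1}^m μ⁺_j ∇c_j(w⁺) + (w⁺ − w)/β‖_∞ ≤ τ, and assume the termination conditions ‖w⁺ − w‖_∞ + β·τ ≤ β·ε_1 and ‖μ⁺ − μ‖_∞ ≤ β·ε_2 hold. Then: (i) μ⁺_j ≥ 0 for all j and there exists a subgradient g' of h at w⁺ with ‖∇f(w⁺) + g' + Σ_{j=1}^m μ⁺_j ∇c_j(w⁺)‖_∞ ≤ ε_1; and (ii) there exists v ∈ ℝ^m with v_j ≤ 0 and v_j·μ⁺_j = 0 for all j, such that ‖c(w⁺) − v‖_∞ ≤ ε_2, where c(w⁺)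 = (c_1(w⁺), …, c_m(w⁺)). -/
/-!
Part (i) is the triangle inequality: the stationarity residual of the proximal subproblem differs
from the KKT residual only by `(w⁺ - w)/β`, which the first termination test bounds by `ε₁ - τ`.
Part (ii) uses `v = c(w⁺) - (μ⁺ - μ)/β`: writing `x = μ + β c(w⁺)`, one has
`μ⁺ = max x 0` and `v = min x 0 / β`, so `v ≤ 0` and `v μ⁺ = 0`, while `c(w⁺) - v = (μ⁺ - μ)/β`
is controlled by the second termination test.
-/

open scoped RealInnerProductSpace

/-- The ℓ∞-norm of a vector in Euclidean space. -/
noncomputable def linf {d : ℕ} (v : EuclideanSpace ℝ (Fin d)) : ℝ :=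
  ‖(WithLp.equiv 2 (Fin d → ℝ)) v‖

theorem norm_le_of_norm_add_inv_smul_le {E : Type*} [SeminormedAddCommGroup E] [NormedSpace ℝ E]
    {a u : E} {β τ ε : ℝ} (hβ : 0 < β) (ha : ‖a + β⁻¹ • u‖ ≤ τ) (hu : ‖u‖ + β * τ ≤ β * ε) :
    ‖a‖ ≤ ε := by
  have hu' : β⁻¹ * ‖u‖ ≤ ε - τ := by
    rw [inv_mul_le_iff₀ hβ]
    linarith
  calc ‖a‖ = ‖(a + β⁻¹ • u) - β⁻¹ • u‖ := by rw [add_sub_cancel_right]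
    _ ≤ ‖a + β⁻¹ • u‖ + β⁻¹ * ‖u‖ := by
        rw [← norm_smul_of_nonneg (inv_pos.mpr hβ).le]
        exact norm_sub_le _ _
    _ ≤ ε := by linarith

theorem linf_le_of_linf_add_inv_smul_le {d : ℕ} {a u : EuclideanSpace ℝ (Fin d)} {β τ ε : ℝ}
    (hβ : 0 < β) (ha : linf (a + β⁻¹ • u) ≤ τ) (hu : linf u + β * τ ≤ β * ε) : linf a ≤ ε :=
  norm_le_of_norm_add_inv_smul_le (E := Fin d → ℝ) hβ ha hu

theorem sub_inv_mul_max_sub_eq_inv_mul_min {a b β : ℝ} (hβ : β ≠ 0) :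
    b - β⁻¹ * (max (a + β * b) 0 - a) = β⁻¹ * min (a + β * b) 0 := by
  rw [show max (a + β * b) 0 = a + β * b - min (a + β * b) 0 by
    linarith [min_add_max (a + β * b) 0]]
  field_simp
  ring

theorem exists_complementary_near_of_eq_max {ι : Type*} [Fintype ι] {a b p : ι → ℝ} {β ε : ℝ}
    (hβ : 0 < β) (hp : ∀ j, p j = max (a j + β * b j) 0) (hpa : ‖p - a‖ ≤ β * ε) :
    ∃ v : ι → ℝ, (∀ j, v j ≤ 0 ∧ v j * p j = 0) ∧ ‖b - v‖ ≤ ε := by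
  refine ⟨fun j => β⁻¹ * min (a j + β * b j) 0, fun j => ⟨?_, ?_⟩, ?_⟩
  · exact mul_nonpos_of_nonneg_of_nonpos (inv_nonneg.mpr hβ.le) (min_le_right _ _)
  · rw [hp j, mul_assoc, min_mul_max, mul_zero, mul_zero]
  · have hbv : (b - fun j => β⁻¹ * min (a j + β * b j) 0) = β⁻¹ • (p - a) := by
      funext j
      rw [Pi.sub_apply, ← sub_inv_mul_max_sub_eq_inv_mul_min hβ.ne', ← hp j]
      simp only [Pi.smul_apply, Pi.sub_apply, smul_eq_mul]
      ring
    rw [hbv, norm_smul_of_nonneg (inv_nonneg.mpr hβ.le), inv_mul_le_iff₀ hβ]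
    exact hpa

theorem stmt_5_general {d m : ℕ}
    (f' : EuclideanSpace ℝ (Fin d) → EuclideanSpace ℝ (Fin d))
    (c : Fin m → EuclideanSpace ℝ (Fin d) → ℝ)
    (c' : Fin m → EuclideanSpace ℝ (Fin d) → EuclideanSpace ℝ (Fin d))
    (h : EuclideanSpace ℝ (Fin d) → ℝ)
    (β τ ε1 ε2 : ℝ) (hβ : 0 < β)
    (w wplus : EuclideanSpace ℝ (Fin d)) (μ : Fin m → ℝ)
    (μplus : Fin m → ℝ) (hμplus : ∀ j, μplus j = max (μ j + β * c j wplus) 0)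
    (hstat : ∃ g : EuclideanSpace ℝ (Fin d),
      (∀ y, h wplus + ⟪g, y - wplus⟫ ≤ h y) ∧
      linf (f' wplus + g + ∑ j, μplus j • c' j wplus + β⁻¹ • (wplus - w)) ≤ τ)
    (hterm1 : linf (wplus - w) + β * τ ≤ β * ε1)
    (hterm2 : ‖μplus - μ‖ ≤ β * ε2) :
    ((∀ j, 0 ≤ μplus j) ∧
      ∃ g' : EuclideanSpace ℝ (Fin d),
        (∀ y, h wplus + ⟪g', y - wplus⟫ ≤ h y) ∧
        linf (f' wplus + g' + ∑ j, μplus j • c' j wplus) ≤ ε1) ∧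
    (∃ v : Fin m → ℝ, (∀ j, v j ≤ 0 ∧ v j * μplus j = 0) ∧
      ‖(fun j => c j wplus) - v‖ ≤ ε2) := by
  obtain ⟨g, hg, hres⟩ := hstat
  refine ⟨⟨fun j => ?_, g, hg, linf_le_of_linf_add_inv_smul_le hβ hres hterm1⟩,
    exists_complementary_near_of_eq_max hβ hμplus hterm2⟩
  rw [hμplus j]
  exact le_max_right _ _

/-- Theorem 3.1 (output of the proximal AL based FL algorithm at termination):
if `μ⁺ = [μ + β c(w⁺)]₊`, the proximal AL subproblem is solved to accuracy `τ` in
the ℓ∞ sense, and the termination tests `‖w⁺ − w‖_∞ + βτ ≤ βε₁`,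
`‖μ⁺ − μ‖_∞ ≤ βε₂` hold, then `(w⁺, μ⁺)` is an `(ε₁, ε₂)`-optimal solution. -/
theorem stmt_5 {d m : ℕ}
    (f : EuclideanSpace ℝ (Fin d) → ℝ) (f' : EuclideanSpace ℝ (Fin d) → EuclideanSpace ℝ (Fin d))
    (hfcvx : ConvexOn ℝ Set.univ f) (hf' : ∀ x, HasGradientAt f (f' x) x)
    (c : Fin m → EuclideanSpace ℝ (Fin d) → ℝ)
    (c' : Fin m → EuclideanSpace ℝ (Fin d) → EuclideanSpace ℝ (Fin d))
    (hccvx : ∀ j, ConvexOn ℝ Set.univ (c j)) (hc' : ∀ j x, HasGradientAt (c j) (c' j x) x)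
    (h : EuclideanSpace ℝ (Fin d) → ℝ) (hhcvx : ConvexOn ℝ Set.univ h)
    (β τ ε1 ε2 : ℝ) (hβ : 0 < β) (hτ : 0 < τ) (hε1 : 0 < ε1) (hε2 : 0 < ε2)
    (w wplus : EuclideanSpace ℝ (Fin d)) (μ : Fin m → ℝ) (hμ : ∀ j, 0 ≤ μ j)
    (μplus : Fin m → ℝ) (hμplus : ∀ j, μplus j = max (μ j + β * c j wplus) 0)
    (hstat : ∃ g : EuclideanSpace ℝ (Fin d),
      (∀ y, h wplus + ⟪g, y - wplus⟫ ≤ h y) ∧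
      linf (f' wplus + g + ∑ j, μplus j • c' j wplus + β⁻¹ • (wplus - w)) ≤ τ)
    (hterm1 : linf (wplus - w) + β * τ ≤ β * ε1)
    (hterm2 : ‖μplus - μ‖ ≤ β * ε2) :
    ((∀ j, 0 ≤ μplus j) ∧
      ∃ g' : EuclideanSpace ℝ (Fin d),
        (∀ y, h wplus + ⟪g', y - wplus⟫ ≤ h y) ∧
        linf (f' wplus + g' + ∑ j, μplus j • c' j wplus) ≤ ε1) ∧
    (∃ v : Fin m → ℝ, (∀ j, v j ≤ 0 ∧ v j * μplus j = 0) ∧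
      ‖(fun j => c j wplus) - v‖ ≤ ε2) :=
  stmt_5_general f' c c' h β τ ε1 ε2 hβ w wplus μ μplus hμplus hstat hterm1 hterm2
end

section
/- Let f : ℝ^d → ℝ and c = (c_1, …, c_m) : ℝ^d → ℝ^m be differentiable, β > 0, n ≥ 1 a natural number, μ ∈ ℝ^m, w̄ ∈ ℝ^d. For w ∈ ℝ^d let A(w) : ℝ^m → ℝ^d be the linear map A(w)ν = Σ_{j=1}^m ν_j ∇c_j(w) (the adjoint of the Jacobian of c at w), and define G(w) = ∇f(w) + A(w)[μ + β c(w)]_+ + (w − w̄)/((n+1)β). Let U ⊆ ℝ^d be a convex set and L_1, L_2, U_1, U_2 ≥ 0 constants such that for all u, v ∈ U: ‖∇f(u) − ∇f(v)‖ ≤ L_1‖u − v‖, ‖A(u) − A(v)‖ ≤ L_2‖u − v‖ (operator norm), ‖c(u)‖ ≤ U_1, and ‖A(u)‖ ≤ U_2. Then for all u, v ∈ U, ‖G(u) − G(v)‖ ≤ (L_1 + (‖μ‖ + β U_1)·L_2 + β U_2² + 1/((n+1)β))·‖u − v‖. -/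
/-!
Split `G u - G v` into the differences of `∇f`, of `A(·)[μ + βc(·)]₊` and of the proximal
term. For the middle one, `A u p - A v q = (A u - A v) p + A v (p - q)`; here
`‖p‖ ≤ ‖μ‖ + βU₁` and `‖p - q‖ ≤ β‖c(u) - c(v)‖` because `[·]₊` is `1`-Lipschitz and
vanishes at `0`, while `‖c(u) - c(v)‖ ≤ U₂‖u - v‖` by the mean value inequality, the
derivative of `c` at `w` being the adjoint of `A(w)`, which has the same norm.
-/

namespace EuclideanSpace

variable {ι : Type*} [Fintype ι]

theorem norm_le_norm_of_forall_abs_le {x y : EuclideanSpace ℝ ι} (h : ∀ i, |x i| ≤ |y i|) :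
    ‖x‖ ≤ ‖y‖ := by
  simp only [EuclideanSpace.norm_eq, Real.norm_eq_abs]
  exact Real.sqrt_le_sqrt (Finset.sum_le_sum fun i _ => pow_le_pow_left₀ (abs_nonneg _) (h i) 2)

noncomputable def posPart (x : EuclideanSpace ℝ ι) : EuclideanSpace ℝ ι :=
  WithLp.toLp 2 fun j => max (x j) 0

theorem norm_posPart_le (x : EuclideanSpace ℝ ι) : ‖posPart x‖ ≤ ‖x‖ :=
  norm_le_norm_of_forall_abs_le fun i => by
    rw [posPart, PiLp.toLp_apply, abs_of_nonneg (le_max_right _ _)]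
    exact max_le (le_abs_self _) (abs_nonneg _)

theorem norm_posPart_sub_posPart_le (x y : EuclideanSpace ℝ ι) :
    ‖posPart x - posPart y‖ ≤ ‖x - y‖ :=
  norm_le_norm_of_forall_abs_le fun i => abs_max_sub_max_le_abs (x i) (y i) 0

theorem norm_posPart_add_smul_le {β : ℝ} (hβ : 0 ≤ β) (μ x : EuclideanSpace ℝ ι) :
    ‖posPart (μ + β • x)‖ ≤ ‖μ‖ + β * ‖x‖ :=
  (norm_posPart_le _).trans <| (norm_add_le _ _).trans_eq <| by
    rw [norm_smul, Real.norm_of_nonneg hβ]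

theorem norm_posPart_add_smul_sub_le {β : ℝ} (hβ : 0 ≤ β) (μ x y : EuclideanSpace ℝ ι) :
    ‖posPart (μ + β • x) - posPart (μ + β • y)‖ ≤ β * ‖x - y‖ :=
  (norm_posPart_sub_posPart_le _ _).trans_eq <| by
    rw [add_sub_add_left_eq_sub, ← smul_sub, norm_smul, Real.norm_of_nonneg hβ]

variable {E : Type*} [NormedAddCommGroup E] [InnerProductSpace ℝ E] [CompleteSpace E]

theorem hasFDerivWithinAt_toLp_of_hasGradientAt {c : ι → E → ℝ} {c' : ι → E} {x : E}
    {s : Set E} (hc : ∀ j, HasGradientAt (c j) (c' j) x)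
    {T : EuclideanSpace ℝ ι →L[ℝ] E} (hT : ∀ ν, T ν = ∑ j, ν j • c' j) :
    HasFDerivWithinAt (fun w => WithLp.toLp 2 fun j => c j w)
      (ContinuousLinearMap.adjoint T) s x := by
  classical
  refine (hasFDerivWithinAt_piLp 2).2 fun j => ?_
  refine (hc j).hasFDerivAt.hasFDerivWithinAt.congr_fderiv (ContinuousLinearMap.ext fun h => ?_)
  have hTsingle : T (single j 1) = c' j := by
    simp [hT, PiLp.single_apply]
  simp [← hTsingle, ← ContinuousLinearMap.adjoint_inner_right, inner_single_left]

theorem norm_toLp_sub_le_of_convex {c : ι → E → ℝ} {c' : ι → E → E}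
    (hc : ∀ j x, HasGradientAt (c j) (c' j x) x) {A : E → EuclideanSpace ℝ ι →L[ℝ] E}
    (hA : ∀ w ν, A w ν = ∑ j, ν j • c' j w) {U : Set E} (hU : Convex ℝ U) {K : ℝ}
    (hAK : ∀ u ∈ U, ‖A u‖ ≤ K) {u v : E} (hu : u ∈ U) (hv : v ∈ U) :
    ‖(WithLp.toLp 2 fun j => c j u : EuclideanSpace ℝ ι) - WithLp.toLp 2 fun j => c j v‖ ≤
      K * ‖u - v‖ :=
  hU.norm_image_sub_le_of_norm_hasFDerivWithin_le
    (fun w _ => hasFDerivWithinAt_toLp_of_hasGradientAt (fun j => hc j w) (hA w))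
    (fun w hw => by rw [LinearIsometryEquiv.norm_map]; exact hAK w hw) hv hu

end EuclideanSpace

theorem ContinuousLinearMap.norm_apply_sub_apply_le {𝕜 E F : Type*} [NontriviallyNormedField 𝕜]
    [SeminormedAddCommGroup E] [SeminormedAddCommGroup F] [NormedSpace 𝕜 E] [NormedSpace 𝕜 F]
    (S T : E →L[𝕜] F) (p q : E) : ‖S p - T q‖ ≤ ‖S - T‖ * ‖p‖ + ‖T‖ * ‖p - q‖ :=
  calc ‖S p - T q‖ = ‖(S - T) p + T (p - q)‖ := by simp only [sub_apply, map_sub]; abel_nf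
    _ ≤ ‖(S - T) p‖ + ‖T (p - q)‖ := norm_add_le _ _
    _ ≤ ‖S - T‖ * ‖p‖ + ‖T‖ * ‖p - q‖ := add_le_add (le_opNorm _ _) (le_opNorm _ _)

open EuclideanSpace

theorem stmt_7_general {d m : ℕ}
    (f' : EuclideanSpace ℝ (Fin d) → EuclideanSpace ℝ (Fin d))
    (c : Fin m → EuclideanSpace ℝ (Fin d) → ℝ)
    (c' : Fin m → EuclideanSpace ℝ (Fin d) → EuclideanSpace ℝ (Fin d))
    (hc' : ∀ j x, HasGradientAt (c j) (c' j x) x)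
    (β : ℝ) (hβ : 0 < β) (n : ℕ)
    (μ : EuclideanSpace ℝ (Fin m)) (wbar : EuclideanSpace ℝ (Fin d))
    (A : EuclideanSpace ℝ (Fin d) → (EuclideanSpace ℝ (Fin m) →L[ℝ] EuclideanSpace ℝ (Fin d)))
    (hA : ∀ w ν, A w ν = ∑ j, ν j • c' j w)
    (G : EuclideanSpace ℝ (Fin d) → EuclideanSpace ℝ (Fin d))
    (hG : ∀ w, G w = f' w +
      A w ((WithLp.equiv 2 (Fin m → ℝ)).symm fun j => max (μ j + β * c j w) 0) +
      (((n : ℝ) + 1) * β)⁻¹ • (w - wbar))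
    (U : Set (EuclideanSpace ℝ (Fin d))) (hU : Convex ℝ U)
    (L1 L2 U1 U2 : ℝ)
    (hfLip : ∀ u ∈ U, ∀ v ∈ U, ‖f' u - f' v‖ ≤ L1 * ‖u - v‖)
    (hALip : ∀ u ∈ U, ∀ v ∈ U, ‖A u - A v‖ ≤ L2 * ‖u - v‖)
    (hcBd : ∀ u ∈ U, ‖(WithLp.equiv 2 (Fin m → ℝ)).symm (fun j => c j u)‖ ≤ U1)
    (hABd : ∀ u ∈ U, ‖A u‖ ≤ U2) :
    ∀ u ∈ U, ∀ v ∈ U,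
      ‖G u - G v‖ ≤
        (L1 + (‖μ‖ + β * U1) * L2 + β * U2 ^ 2 + 1 / (((n : ℝ) + 1) * β)) * ‖u - v‖ := by
  intro u hu v hv
  set C : EuclideanSpace ℝ (Fin d) → EuclideanSpace ℝ (Fin m) :=
    fun w => WithLp.toLp 2 fun j => c j w
  set p := fun w => posPart (μ + β • C w)
  set k := (((n : ℝ) + 1) * β)⁻¹
  have hGp : ∀ w, G w = f' w + A w (p w) + k • (w - wbar) := hG
  have hGuv : G u - G v = (f' u - f' v) + (A u (p u) - A v (p v)) + k • (u - v) := by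
    rw [hGp, hGp, smul_sub, smul_sub, smul_sub]; abel
  have hpu : ‖p u‖ ≤ ‖μ‖ + β * U1 :=
    (norm_posPart_add_smul_le hβ.le μ (C u)).trans (by gcongr; exact hcBd u hu)
  have hpuv : ‖p u - p v‖ ≤ β * (U2 * ‖u - v‖) :=
    (norm_posPart_add_smul_sub_le hβ.le μ (C u) (C v)).trans
      (by gcongr; exact norm_toLp_sub_le_of_convex hc' hA hU hABd hu hv)
  have hAuv := hALip u hu v hv
  have hAv := hABd v hv
  have hApuv : ‖A u (p u) - A v (p v)‖ ≤
      L2 * ‖u - v‖ * (‖μ‖ + β * U1) + U2 * (β * (U2 * ‖u - v‖)) :=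
    (ContinuousLinearMap.norm_apply_sub_apply_le _ _ _ _).trans <| add_le_add
      (mul_le_mul hAuv hpu (norm_nonneg _) ((norm_nonneg _).trans hAuv))
      (mul_le_mul hAv hpuv (norm_nonneg _) ((norm_nonneg _).trans hAv))
  calc ‖G u - G v‖ ≤ ‖f' u - f' v‖ + ‖A u (p u) - A v (p v)‖ + ‖k • (u - v)‖ := by
        rw [hGuv]; exact norm_add₃_le
    _ ≤ L1 * ‖u - v‖ + (L2 * ‖u - v‖ * (‖μ‖ + β * U1) + U2 * (β * (U2 * ‖u - v‖))) +
        k * ‖u - v‖ := by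
        rw [norm_smul, Real.norm_of_nonneg (by positivity)]
        gcongr
        exact hfLip u hu v hv
    _ = _ := by rw [one_div]; ring

/-- Quantitative Lipschitz estimate for the gradient
`G(w) = ∇f(w) + A(w)[μ + βc(w)]₊ + (w − w̄)/((n+1)β)` of the augmented-Lagrangian
merit function on a convex set `U`, where `A(w)ν = Σ_j ν_j ∇c_j(w)`:
if on `U` the gradient `∇f` is `L₁`-Lipschitz, `A` is `L₂`-Lipschitz in operator
norm, `‖c(u)‖ ≤ U₁` and `‖A(u)‖ ≤ U₂`, then `G` is
`(L₁ + (‖μ‖ + βU₁)L₂ + βU₂² + 1/((n+1)β))`-Lipschitz on `U`. -/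
theorem stmt_7 {d m : ℕ}
    (f : EuclideanSpace ℝ (Fin d) → ℝ) (f' : EuclideanSpace ℝ (Fin d) → EuclideanSpace ℝ (Fin d))
    (hf' : ∀ x, HasGradientAt f (f' x) x)
    (c : Fin m → EuclideanSpace ℝ (Fin d) → ℝ)
    (c' : Fin m → EuclideanSpace ℝ (Fin d) → EuclideanSpace ℝ (Fin d))
    (hc' : ∀ j x, HasGradientAt (c j) (c' j x) x)
    (β : ℝ) (hβ : 0 < β) (n : ℕ) (hn : 1 ≤ n)
    (μ : EuclideanSpace ℝ (Fin m)) (wbar : EuclideanSpace ℝ (Fin d))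
    (A : EuclideanSpace ℝ (Fin d) → (EuclideanSpace ℝ (Fin m) →L[ℝ] EuclideanSpace ℝ (Fin d)))
    (hA : ∀ w ν, A w ν = ∑ j, ν j • c' j w)
    (G : EuclideanSpace ℝ (Fin d) → EuclideanSpace ℝ (Fin d))
    (hG : ∀ w, G w = f' w +
      A w ((WithLp.equiv 2 (Fin m → ℝ)).symm fun j => max (μ j + β * c j w) 0) +
      (((n : ℝ) + 1) * β)⁻¹ • (w - wbar))
    (U : Set (EuclideanSpace ℝ (Fin d))) (hU : Convex ℝ U)
    (L1 L2 U1 U2 : ℝ) (hL1 : 0 ≤ L1) (hL2 : 0 ≤ L2) (hU1 : 0 ≤ U1) (hU2 : 0 ≤ U2)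
    (hfLip : ∀ u ∈ U, ∀ v ∈ U, ‖f' u - f' v‖ ≤ L1 * ‖u - v‖)
    (hALip : ∀ u ∈ U, ∀ v ∈ U, ‖A u - A v‖ ≤ L2 * ‖u - v‖)
    (hcBd : ∀ u ∈ U, ‖(WithLp.equiv 2 (Fin m → ℝ)).symm (fun j => c j u)‖ ≤ U1)
    (hABd : ∀ u ∈ U, ‖A u‖ ≤ U2) :
    ∀ u ∈ U, ∀ v ∈ U,
      ‖G u - G v‖ ≤
        (L1 + (‖μ‖ + β * U1) * L2 + β * U2 ^ 2 + 1 / (((n : ℝ) + 1) * β)) * ‖u - v‖ :=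
  stmt_7_general f' c c' hc' β hβ n μ wbar A hA G hG U hU L1 L2 U1 U2 hfLip hALip hcBd hABd
end

section
/- Let P_0, P_1, …, P_n : ℝ^d → ℝ be differentiable, h : ℝ^d → ℝ convex, ρ_1, …, ρ_n > 0, and ε ≥ 0. Let w ∈ ℝ^d and, for 1 ≤ i ≤ n, let u_i, λ_i ∈ ℝ^d and set ũ_i = u_i + λ_i/ρ_i. Suppose there exists a subgradient g of h at w such that ‖∇P_0(w) + g + Σ_{i=1}^n ρ_i(w − ũ_i)‖_∞ ≤ ε. For 1 ≤ i ≤ n set ε̃_i = ‖∇P_i(w) + λ_i − ρ_i(w − u_i)‖_∞. Then there exists a subgradient g' of h at w such that ‖Σ_{i=0}^n ∇P_i(w) + g'‖_∞ ≤ ε + Σ_{i=1}^n ε̃_i. -/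
/-!
The same subgradient `g` works. Since `ρ_i (w − ũ_i) = ρ_i (w − u_i) − λ_i`, the full residual
`∇P₀(w) + Σ_i ∇P_i(w) + g` is the server residual `∇P₀(w) + g + Σ_i ρ_i (w − ũ_i)` plus the client
residuals `∇P_i(w) + λ_i − ρ_i (w − u_i)`, and the triangle inequality for `‖·‖_∞` gives the bound.
-/

open scoped RealInnerProductSpace

theorem norm_add_sum_le_norm_add_sum_add_sum_norm_sub {E ι : Type*} [SeminormedAddCommGroup E]
    (s : Finset ι) (a : E) (x y : ι → E) :
    ‖a + ∑ i ∈ s, x i‖ ≤ ‖a + ∑ i ∈ s, y i‖ + ∑ i ∈ s, ‖x i - y i‖ := by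
  have hsplit : a + ∑ i ∈ s, x i = (a + ∑ i ∈ s, y i) + ∑ i ∈ s, (x i - y i) := by
    rw [Finset.sum_sub_distrib]
    abel
  rw [hsplit]
  exact (norm_add_le _ _).trans (add_le_add_right (norm_sum_le _ _) _)

theorem linf_add_sum_le_linf_add_sum_add_sum_linf_sub {d : ℕ} {ι : Type*} (s : Finset ι)
    (a : EuclideanSpace ℝ (Fin d)) (x y : ι → EuclideanSpace ℝ (Fin d)) :
    linf (a + ∑ i ∈ s, x i) ≤ linf (a + ∑ i ∈ s, y i) + ∑ i ∈ s, linf (x i - y i) := by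
  simpa only [linf, WithLp.equiv_apply, WithLp.ofLp_add, WithLp.ofLp_sum, WithLp.ofLp_sub] using
    norm_add_sum_le_norm_add_sum_add_sum_norm_sub s a.ofLp (fun i ↦ (x i).ofLp) (fun i ↦ (y i).ofLp)

theorem smul_sub_add_inv_smul {K V : Type*} [DivisionRing K] [AddCommGroup V] [Module K V]
    {r : K} (hr : r ≠ 0) (w u l : V) : r • (w - (u + r⁻¹ • l)) = r • (w - u) - l := by
  rw [sub_add_eq_sub_sub, smul_sub, smul_smul, mul_inv_cancel₀ hr, one_smul]

theorem stmt_9_general {d : ℕ} (n : ℕ)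
    (P0' : EuclideanSpace ℝ (Fin d) → EuclideanSpace ℝ (Fin d))
    (P' : Fin n → EuclideanSpace ℝ (Fin d) → EuclideanSpace ℝ (Fin d))
    (h : EuclideanSpace ℝ (Fin d) → ℝ)
    (ρ : Fin n → ℝ) (hρ : ∀ i, 0 < ρ i) (ε : ℝ)
    (w : EuclideanSpace ℝ (Fin d)) (u lam : Fin n → EuclideanSpace ℝ (Fin d))
    (utilde : Fin n → EuclideanSpace ℝ (Fin d))
    (hutilde : ∀ i, utilde i = u i + (ρ i)⁻¹ • lam i)
    (hstat : ∃ g : EuclideanSpace ℝ (Fin d),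
      (∀ y, h w + ⟪g, y - w⟫ ≤ h y) ∧
      linf (P0' w + g + ∑ i, ρ i • (w - utilde i)) ≤ ε) :
    ∃ g' : EuclideanSpace ℝ (Fin d),
      (∀ y, h w + ⟪g', y - w⟫ ≤ h y) ∧
      linf (P0' w + ∑ i, P' i w + g') ≤
        ε + ∑ i, linf (P' i w + lam i - ρ i • (w - u i)) := by
  obtain ⟨g, hg, hserver⟩ := hstat
  have hpenalty : ∀ i, ρ i • (w - utilde i) = ρ i • (w - u i) - lam i := fun i ↦ by
    rw [hutilde i, smul_sub_add_inv_smul (hρ i).ne']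
  refine ⟨g, hg, ?_⟩
  calc linf (P0' w + ∑ i, P' i w + g) = linf (P0' w + g + ∑ i, P' i w) := by rw [add_right_comm]
    _ ≤ linf (P0' w + g + ∑ i, ρ i • (w - utilde i)) +
          ∑ i, linf (P' i w - ρ i • (w - utilde i)) :=
        linf_add_sum_le_linf_add_sum_add_sum_linf_sub _ _ _ _
    _ ≤ ε + ∑ i, linf (P' i w + lam i - ρ i • (w - u i)) := by
        simp only [hpenalty, sub_sub_eq_add_sub] at hserver ⊢
        exact add_le_add_left hserver _

/-- Theorem 4.1 (output of the inexact ADMM based FL algorithm): if the server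
subproblem is solved to ℓ∞-accuracy `ε`, i.e. there is a subgradient `g` of `h` at
`w` with `‖∇P₀(w) + g + Σ_i ρ_i(w − ũ_i)‖_∞ ≤ ε` where `ũ_i = u_i + λ_i/ρ_i`, and
`ε̃_i = ‖∇P_i(w) + λ_i − ρ_i(w − u_i)‖_∞`, then there is a subgradient `g'` of `h`
at `w` with `‖Σ_{i=0}^n ∇P_i(w) + g'‖_∞ ≤ ε + Σ_i ε̃_i`. -/
theorem stmt_9 {d : ℕ} (n : ℕ)
    (P0 : EuclideanSpace ℝ (Fin d) → ℝ) (P0' : EuclideanSpace ℝ (Fin d) → EuclideanSpace ℝ (Fin d))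
    (hP0 : ∀ x, HasGradientAt P0 (P0' x) x)
    (P : Fin n → EuclideanSpace ℝ (Fin d) → ℝ)
    (P' : Fin n → EuclideanSpace ℝ (Fin d) → EuclideanSpace ℝ (Fin d))
    (hP : ∀ i x, HasGradientAt (P i) (P' i x) x)
    (h : EuclideanSpace ℝ (Fin d) → ℝ) (hh : ConvexOn ℝ Set.univ h)
    (ρ : Fin n → ℝ) (hρ : ∀ i, 0 < ρ i) (ε : ℝ) (hε : 0 ≤ ε)
    (w : EuclideanSpace ℝ (Fin d)) (u lam : Fin n → EuclideanSpace ℝ (Fin d))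
    (utilde : Fin n → EuclideanSpace ℝ (Fin d))
    (hutilde : ∀ i, utilde i = u i + (ρ i)⁻¹ • lam i)
    (hstat : ∃ g : EuclideanSpace ℝ (Fin d),
      (∀ y, h w + ⟪g, y - w⟫ ≤ h y) ∧
      linf (P0' w + g + ∑ i, ρ i • (w - utilde i)) ≤ ε) :
    ∃ g' : EuclideanSpace ℝ (Fin d),
      (∀ y, h w + ⟪g', y - w⟫ ≤ h y) ∧
      linf (P0' w + ∑ i, P' i w + g') ≤
        ε + ∑ i, linf (P' i w + lam i - ρ i • (w - u i)) :=
  stmt_9_general n P0' P' h ρ hρ ε w u lam utilde hutilde hstat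
end

section
/- Let σ > 0 and let P_0, P_1, …, P_n : ℝ^d → ℝ be differentiable with σ-strongly monotone gradients, i.e., ⟨∇P_i(x) − ∇P_i(y), x − y⟩ ≥ σ‖x − y‖² for all x, y and all 0 ≤ i ≤ n; let h : ℝ^d → ℝ be convex, ρ_1, …, ρ_n > 0, and ε ≥ 0. Let (w*, λ_1*, …, λ_n*, h*) be a KKT point: h* is a subgradient of h at w*, ∇P_i(w*) + λ_i* = 0 for 1 ≤ i ≤ n, and ∇P_0(w*) + h* − Σ_{i=1}^n λ_i* = 0. Let u_i, λ_i ∈ ℝ^d (old iterates) and w⁺, u_i⁺ ∈ ℝ^d (new iterates), set λ_i⁺ = λ_i + ρ_i(u_i⁺ − w⁺), and assume: there is a subgradient h⁺ of h at w⁺ such that ‖∇P_0(w⁺) + h⁺ + Σ_{i=1}^n (ρ_i(u_i⁺ − u_i) − λ_i⁺)‖ ≤ ε, and ‖∇P_i(u_i⁺) + λ_i⁺‖ ≤ ε for each 1 ≤ i ≤ n. Then (σ/2)(‖w⁺ − w*‖² + Σ_{i=1}^n ‖u_i⁺ − w*‖²) + Σ_{i=1}^n (ρ_i/2)‖w⁺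 − u_i‖² ≤ Σ_{i=1}^n [ (ρ_i/2)‖w* − u_i‖² + (1/(2ρ_i))‖λ_i* − λ_i‖² − (ρ_i/2)‖w* − u_i⁺‖² − (1/(2ρ_i))‖λ_i* − λ_i⁺‖² ] + ((n+1)/(2σ))·ε². -/
/-! Each block of the ADMM step is tested against the KKT point: strong monotonicity of the
gradient, plus monotonicity of the subdifferential of `h` on the server, turns the inexact
optimality conditions into `σ ‖x⁺ - x*‖² ≤ ⟪residual + multiplier gap, x⁺ - x*⟫`. Young's
inequality absorbs each residual of size `ε` at the price of half the `σ`-term and `ε² / (2σ)`.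
The multiplier gaps of the server and of the clients then combine, by the polarization identity
and `λ_i⁺ = λ_i + ρ_i (u_i⁺ - w⁺)`, into the telescoping terms of the right-hand side. -/

open scoped RealInnerProductSpace

section Descent

variable {E : Type*} [NormedAddCommGroup E] [InnerProductSpace ℝ E]

lemma real_inner_le_half_mul_norm_sq_add {σ ε : ℝ} (hσ : 0 < σ) {e : E} (he : ‖e‖ ≤ ε) (x : E) :
    ⟪e, x⟫ ≤ σ / 2 * ‖x‖ ^ 2 + ε ^ 2 / (2 * σ) := by
  have hCS : ⟪e, x⟫ ≤ ε * ‖x‖ :=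
    (real_inner_le_norm e x).trans (mul_le_mul_of_nonneg_right he (norm_nonneg x))
  have hYoung : σ / 2 * ‖x‖ ^ 2 + ε ^ 2 / (2 * σ) - ε * ‖x‖ = (σ * ‖x‖ - ε) ^ 2 / (2 * σ) := by
    field_simp
    ring
  have : 0 ≤ (σ * ‖x‖ - ε) ^ 2 / (2 * σ) := by positivity
  linarith

lemma half_mul_norm_sq_le_of_le_inner_add {σ ε : ℝ} (hσ : 0 < σ) {e b x : E}
    (hmono : σ * ‖x‖ ^ 2 ≤ ⟪e + b, x⟫) (he : ‖e‖ ≤ ε) :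
    σ / 2 * ‖x‖ ^ 2 ≤ ⟪b, x⟫ + ε ^ 2 / (2 * σ) := by
  rw [inner_add_left] at hmono
  linarith [real_inner_le_half_mul_norm_sq_add hσ he x]

lemma inner_sub_nonneg_of_subgradient {h : E → ℝ} {x y g g' : E}
    (hg : ∀ z, h x + ⟪g, z - x⟫ ≤ h z) (hg' : ∀ z, h y + ⟪g', z - y⟫ ≤ h z) :
    0 ≤ ⟪g - g', x - y⟫ := by
  have hx := hg y
  have hy := hg' x
  rw [← neg_sub x y, inner_neg_right] at hx
  rw [inner_sub_left]
  linarith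

lemma admm_multiplier_identity {ρ : ℝ} (hρ : ρ ≠ 0) (lam lam' u u' w w' : E) :
    ⟪(lam + ρ • (u' - w')) - lam' - ρ • (u' - u), w' - w⟫
      + ⟪lam' - (lam + ρ • (u' - w')), u' - w⟫
    = ρ / 2 * ‖w - u‖ ^ 2 + 1 / (2 * ρ) * ‖lam' - lam‖ ^ 2 - ρ / 2 * ‖w - u'‖ ^ 2
      - 1 / (2 * ρ) * ‖lam' - (lam + ρ • (u' - w'))‖ ^ 2 - ρ / 2 * ‖w' - u‖ ^ 2 := by
  simp only [← real_inner_self_eq_norm_sq, inner_sub_left, inner_sub_right,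
    inner_add_left, inner_add_right, real_inner_smul_right,
    real_inner_comm]
  field_simp
  ring

variable {σ ε : ℝ}

lemma server_descent {ι : Type*} [Fintype ι] (hσ : 0 < σ) {F : E → E} {h : E → ℝ}
    {ρ : ι → ℝ} {ws gs w g : E} {lams u u' lam' : ι → E}
    (hmono : σ * ‖w - ws‖ ^ 2 ≤ ⟪F w - F ws, w - ws⟫)
    (hgs : ∀ z, h ws + ⟪gs, z - ws⟫ ≤ h z) (hg : ∀ z, h w + ⟪g, z - w⟫ ≤ h z)
    (hKKT : F ws + gs - ∑ i, lams i = 0)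
    (hres : ‖F w + g + ∑ i, (ρ i • (u' i - u i) - lam' i)‖ ≤ ε) :
    σ / 2 * ‖w - ws‖ ^ 2
      ≤ ∑ i, ⟪lam' i - lams i - ρ i • (u' i - u i), w - ws⟫ + ε ^ 2 / (2 * σ) := by
  have hsub := inner_sub_nonneg_of_subgradient hg hgs
  have hsplit : (F w - F ws) + (g - gs)
      = (F w + g + ∑ i, (ρ i • (u' i - u i) - lam' i))
        + ∑ i, (lam' i - lams i - ρ i • (u' i - u i)) := by
    have hcancel : ∀ i, (ρ i • (u' i - u i) - lam' i) + (lam' i - lams i - ρ i • (u' i - u i))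
        = -lams i := fun i => by abel
    rw [add_assoc _ (∑ i, _), ← Finset.sum_add_distrib]
    simp only [hcancel, Finset.sum_neg_distrib, ← sub_eq_zero.mp hKKT]
    abel
  have hstrong : σ * ‖w - ws‖ ^ 2 ≤ ⟪(F w - F ws) + (g - gs), w - ws⟫ := by
    rw [inner_add_left]
    linarith
  rw [hsplit] at hstrong
  simpa only [sum_inner] using half_mul_norm_sq_le_of_le_inner_add hσ hstrong hres

lemma client_descent (hσ : 0 < σ) {F : E → E} {ρ : ℝ} (hρ : ρ ≠ 0)
    {ws lams u lam w' u' lam' : E}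
    (hmono : σ * ‖u' - ws‖ ^ 2 ≤ ⟪F u' - F ws, u' - ws⟫)
    (hKKT : F ws + lams = 0) (hres : ‖F u' + lam'‖ ≤ ε)
    (hlam' : lam' = lam + ρ • (u' - w')) :
    σ / 2 * ‖u' - ws‖ ^ 2 + ρ / 2 * ‖w' - u‖ ^ 2 + ⟪lam' - lams - ρ • (u' - u), w' - ws⟫
      ≤ ρ / 2 * ‖ws - u‖ ^ 2 + 1 / (2 * ρ) * ‖lams - lam‖ ^ 2 - ρ / 2 * ‖ws - u'‖ ^ 2
          - 1 / (2 * ρ) * ‖lams - lam'‖ ^ 2 + ε ^ 2 / (2 * σ) := by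
  have hsplit : F u' - F ws = (F u' + lam') + (lams - lam') := by
    rw [eq_neg_of_add_eq_zero_left hKKT]
    abel
  rw [hsplit] at hmono
  have hclient := half_mul_norm_sq_le_of_le_inner_add hσ hmono hres
  have hid := admm_multiplier_identity hρ lam lams u u' ws w'
  rw [← hlam'] at hid
  linarith

end Descent

theorem stmt_10_general {d : ℕ} (n : ℕ) (σ : ℝ) (hσ : 0 < σ)
    (P0' : EuclideanSpace ℝ (Fin d) → EuclideanSpace ℝ (Fin d))
    (P' : Fin n → EuclideanSpace ℝ (Fin d) → EuclideanSpace ℝ (Fin d))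
    (hmono0 : ∀ x y, σ * ‖x - y‖ ^ 2 ≤ ⟪P0' x - P0' y, x - y⟫)
    (hmono : ∀ i, ∀ x y, σ * ‖x - y‖ ^ 2 ≤ ⟪P' i x - P' i y, x - y⟫)
    (h : EuclideanSpace ℝ (Fin d) → ℝ)
    (ρ : Fin n → ℝ) (hρ : ∀ i, 0 < ρ i) (ε : ℝ)
    -- KKT point
    (wstar : EuclideanSpace ℝ (Fin d)) (lamstar : Fin n → EuclideanSpace ℝ (Fin d))
    (hstar : EuclideanSpace ℝ (Fin d))
    (hsubstar : ∀ y, h wstar + ⟪hstar, y - wstar⟫ ≤ h y)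
    (hKKT1 : ∀ i, P' i wstar + lamstar i = 0)
    (hKKT2 : P0' wstar + hstar - ∑ i, lamstar i = 0)
    -- old and new iterates
    (u lam : Fin n → EuclideanSpace ℝ (Fin d))
    (wplus : EuclideanSpace ℝ (Fin d)) (uplus : Fin n → EuclideanSpace ℝ (Fin d))
    (lamplus : Fin n → EuclideanSpace ℝ (Fin d))
    (hlamplus : ∀ i, lamplus i = lam i + ρ i • (uplus i - wplus))
    (hserver : ∃ hplus : EuclideanSpace ℝ (Fin d),
      (∀ y, h wplus + ⟪hplus, y - wplus⟫ ≤ h y) ∧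
      ‖P0' wplus + hplus + ∑ i, (ρ i • (uplus i - u i) - lamplus i)‖ ≤ ε)
    (hclient : ∀ i, ‖P' i (uplus i) + lamplus i‖ ≤ ε) :
    (σ / 2) * (‖wplus - wstar‖ ^ 2 + ∑ i, ‖uplus i - wstar‖ ^ 2) +
        ∑ i, (ρ i / 2) * ‖wplus - u i‖ ^ 2 ≤
      (∑ i, ((ρ i / 2) * ‖wstar - u i‖ ^ 2 + (1 / (2 * ρ i)) * ‖lamstar i - lam i‖ ^ 2 -
        (ρ i / 2) * ‖wstar - uplus i‖ ^ 2 - (1 / (2 * ρ i)) * ‖lamstar i - lamplus i‖ ^ 2)) +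
      (((n : ℝ) + 1) / (2 * σ)) * ε ^ 2 := by
  obtain ⟨hplus, hsub, hres⟩ := hserver
  have hserverStep := server_descent hσ (hmono0 wplus wstar) hsubstar hsub hKKT2 hres
  have hclientSteps := Finset.sum_le_sum fun i (_ : i ∈ Finset.univ) =>
    client_descent (u := u i) hσ (hρ i).ne' (hmono i (uplus i) wstar) (hKKT1 i) (hclient i) (hlamplus i)
  simp only [Finset.sum_add_distrib, Finset.sum_const, Finset.card_univ, Fintype.card_fin,
    nsmul_eq_mul] at hclientSteps
  have hconst : ((n : ℝ) + 1) / (2 * σ) * ε ^ 2 = n * (ε ^ 2 / (2 * σ)) + ε ^ 2 / (2 * σ) := by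
    field_simp
  rw [mul_add, Finset.mul_sum, hconst]
  linarith

/-- One-step descent inequality for the inexact ADMM on the consensus reformulation:
with σ-strongly monotone gradients, a KKT point `(w*, λ*, h*)`, inexactly solved
server and client subproblems (accuracy `ε`), and `λ_i⁺ = λ_i + ρ_i(u_i⁺ − w⁺)`,
`(σ/2)(‖w⁺ − w*‖² + Σ_i ‖u_i⁺ − w*‖²) + Σ_i (ρ_i/2)‖w⁺ − u_i‖²
  ≤ Σ_i [(ρ_i/2)‖w* − u_i‖² + (1/2ρ_i)‖λ_i* − λ_i‖²
        − (ρ_i/2)‖w* − u_i⁺‖² − (1/2ρ_i)‖λ_i* − λ_i⁺‖²] + ((n+1)/(2σ))ε²`. -/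
theorem stmt_10 {d : ℕ} (n : ℕ) (hn : 1 ≤ n) (σ : ℝ) (hσ : 0 < σ)
    (P0 : EuclideanSpace ℝ (Fin d) → ℝ) (P0' : EuclideanSpace ℝ (Fin d) → EuclideanSpace ℝ (Fin d))
    (hP0 : ∀ x, HasGradientAt P0 (P0' x) x)
    (P : Fin n → EuclideanSpace ℝ (Fin d) → ℝ)
    (P' : Fin n → EuclideanSpace ℝ (Fin d) → EuclideanSpace ℝ (Fin d))
    (hP : ∀ i x, HasGradientAt (P i) (P' i x) x)
    (hmono0 : ∀ x y, σ * ‖x - y‖ ^ 2 ≤ ⟪P0' x - P0' y, x - y⟫)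
    (hmono : ∀ i, ∀ x y, σ * ‖x - y‖ ^ 2 ≤ ⟪P' i x - P' i y, x - y⟫)
    (h : EuclideanSpace ℝ (Fin d) → ℝ) (hh : ConvexOn ℝ Set.univ h)
    (ρ : Fin n → ℝ) (hρ : ∀ i, 0 < ρ i) (ε : ℝ) (hε : 0 ≤ ε)
    -- KKT point
    (wstar : EuclideanSpace ℝ (Fin d)) (lamstar : Fin n → EuclideanSpace ℝ (Fin d))
    (hstar : EuclideanSpace ℝ (Fin d))
    (hsubstar : ∀ y, h wstar + ⟪hstar, y - wstar⟫ ≤ h y)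
    (hKKT1 : ∀ i, P' i wstar + lamstar i = 0)
    (hKKT2 : P0' wstar + hstar - ∑ i, lamstar i = 0)
    -- old and new iterates
    (u lam : Fin n → EuclideanSpace ℝ (Fin d))
    (wplus : EuclideanSpace ℝ (Fin d)) (uplus : Fin n → EuclideanSpace ℝ (Fin d))
    (lamplus : Fin n → EuclideanSpace ℝ (Fin d))
    (hlamplus : ∀ i, lamplus i = lam i + ρ i • (uplus i - wplus))
    (hserver : ∃ hplus : EuclideanSpace ℝ (Fin d),
      (∀ y, h wplus + ⟪hplus, y - wplus⟫ ≤ h y) ∧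
      ‖P0' wplus + hplus + ∑ i, (ρ i • (uplus i - u i) - lamplus i)‖ ≤ ε)
    (hclient : ∀ i, ‖P' i (uplus i) + lamplus i‖ ≤ ε) :
    (σ / 2) * (‖wplus - wstar‖ ^ 2 + ∑ i, ‖uplus i - wstar‖ ^ 2) +
        ∑ i, (ρ i / 2) * ‖wplus - u i‖ ^ 2 ≤
      (∑ i, ((ρ i / 2) * ‖wstar - u i‖ ^ 2 + (1 / (2 * ρ i)) * ‖lamstar i - lam i‖ ^ 2 -
        (ρ i / 2) * ‖wstar - uplus i‖ ^ 2 - (1 / (2 * ρ i)) * ‖lamstar i - lamplus i‖ ^ 2)) +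
      (((n : ℝ) + 1) / (2 * σ)) * ε ^ 2 :=
  stmt_10_general n σ hσ P0' P' hmono0 hmono h ρ hρ ε wstar lamstar hstar hsubstar hKKT1 hKKT2 u lam
    wplus uplus lamplus hlamplus hserver hclient
end

section
/- Let σ > 0, q ∈ (0,1), let P_0, …, P_n : ℝ^d → ℝ be differentiable with ⟨∇P_i(x) − ∇P_i(y), x − y⟩ ≥ σ‖x − y‖² for all x, y and all i; let h : ℝ^d → ℝ be convex and ρ_1, …, ρ_n > 0. Let (w̃*, λ_1*, …, λ_n*, h*) be a KKT point: h* is a subgradient of h at w̃*, ∇P_i(w̃*) + λ_i* = 0 (1 ≤ i ≤ n), and ∇P_0(w̃*) + h* − Σ_i λ_i* = 0. Let w̃⁰ ∈ ℝ^d and suppose sequences (w^{t+1})_{t≥0}, (u_i^t)_{t≥0}, (λ_i^t)_{t≥0} satisfy the ADMM iterate conditions with initial point w̃⁰ and tolerances q^t. Then for every t ≥ 0 and every 1 ≤ i ≤ n, both ‖w^{t+1} − w̃*‖² and ‖u_i^{t+1} − w̃*‖² are at most (n+1)/(σ²(1 − q²)) + (1/σ)·Σ_{i=1}^n ( ρ_i‖w̃*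 − w̃⁰‖² + (1/ρ_i)‖∇P_i(w̃*) − ∇P_i(w̃⁰)‖² ). -/
/-!
Lyapunov argument. With `V t = ∑ i, (ρ i⁻¹ ‖λᵢᵗ - λᵢ*‖² + ρ i ‖uᵢᵗ - w*‖²)`, strong monotonicity
of the gradients, monotonicity of the subdifferential of `h` and the dual update give
`σ (‖wᵗ⁺¹ - w*‖² + ∑ i, ‖uᵢᵗ⁺¹ - w*‖²) + V (t + 1) ≤ (n + 1) q²ᵗ / σ + V t`,
the inexactness being absorbed by Young's inequality. Summing the geometric error terms bounds
the left-hand side by `(n + 1) / (σ (1 - q²)) + V 0`, and `V 0` is the sum in the bound because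
`uᵢ⁰ = w̃⁰` and `λᵢ⁰ - λᵢ* = ∇Pᵢ(w*) - ∇Pᵢ(w̃⁰)`.
-/

open scoped RealInnerProductSpace
open Finset

section Admm

variable {E : Type*} [NormedAddCommGroup E] {ι : Type*} [Fintype ι]

noncomputable def admmLyapunov (ρ : ι → ℝ) (lstar : ι → E) (wstar : E) (l u : ι → E) : ℝ :=
  ∑ i, ((ρ i)⁻¹ * ‖l i - lstar i‖ ^ 2 + ρ i * ‖u i - wstar‖ ^ 2)

theorem admmLyapunov_nonneg {ρ : ι → ℝ} (hρ : ∀ i, 0 ≤ ρ i) (lstar : ι → E) (wstar : E)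
    (l u : ι → E) : 0 ≤ admmLyapunov ρ lstar wstar l u :=
  sum_nonneg fun i _ => by have := hρ i; positivity

variable [InnerProductSpace ℝ E]

def IsSubgradientAt (f : E → ℝ) (g x : E) : Prop :=
  ∀ y, f x + ⟪g, y - x⟫ ≤ f y

def StronglyMonotoneWith (σ : ℝ) (F : E → E) : Prop :=
  ∀ x y, σ * ‖x - y‖ ^ 2 ≤ ⟪F x - F y, x - y⟫

theorem IsSubgradientAt.inner_sub_nonneg {f : E → ℝ} {g₁ g₂ x₁ x₂ : E}
    (h₁ : IsSubgradientAt f g₁ x₁) (h₂ : IsSubgradientAt f g₂ x₂) :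
    0 ≤ ⟪g₁ - g₂, x₁ - x₂⟫ := by
  have h₁₂ := h₁ x₂
  have h₂₁ := h₂ x₁
  rw [← neg_sub x₁ x₂, inner_neg_right] at h₁₂
  rw [inner_sub_left]
  linarith

theorem two_mul_real_inner_le {ε : ℝ} (hε : 0 < ε) (x y : E) :
    2 * ⟪x, y⟫ ≤ ε * ‖x‖ ^ 2 + ε⁻¹ * ‖y‖ ^ 2 := by
  have h : ε * ‖x‖ ^ 2 + ε⁻¹ * ‖y‖ ^ 2 - 2 * ⟪x, y⟫ = ε⁻¹ * ‖ε • x - y‖ ^ 2 := by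
    rw [norm_sub_sq_real, norm_smul, real_inner_smul_left, Real.norm_of_nonneg hε.le]
    field_simp
    ring
  have : 0 ≤ ε⁻¹ * ‖ε • x - y‖ ^ 2 := by positivity
  linarith

theorem two_mul_real_inner_le_of_norm_le {σ c : ℝ} (hσ : 0 < σ) {e : E} (he : ‖e‖ ≤ c) (x : E) :
    2 * ⟪e, x⟫ ≤ c ^ 2 / σ + σ * ‖x‖ ^ 2 := by
  have hc : ‖e‖ ^ 2 ≤ c ^ 2 := pow_le_pow_left₀ (norm_nonneg e) he 2
  have := two_mul_real_inner_le hσ x e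
  rw [real_inner_comm] at this
  have : σ⁻¹ * ‖e‖ ^ 2 ≤ σ⁻¹ * c ^ 2 := mul_le_mul_of_nonneg_left hc (inv_nonneg.2 hσ.le)
  rw [div_eq_inv_mul]
  linarith

theorem two_mul_real_inner_sub_sub (x y z : E) :
    2 * ⟪x - z, x - y⟫ = ‖x - z‖ ^ 2 + ‖x - y‖ ^ 2 - ‖y - z‖ ^ 2 := by
  rw [show y - z = (x - z) - (x - y) by abel, norm_sub_sq_real (x - z)]
  ring

theorem admm_dual_step_le {ρ : ℝ} (hρ : 0 < ρ) {l l' lstar u u' w' wstar : E}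
    (hupd : l' = l + ρ • (u' - w')) :
    2 * (⟪l' - lstar, w' - u'⟫ - ρ * ⟪u' - u, w' - wstar⟫) ≤
      ρ⁻¹ * (‖l - lstar‖ ^ 2 - ‖l' - lstar‖ ^ 2) + ρ * (‖u - wstar‖ ^ 2 - ‖u' - wstar‖ ^ 2) := by
  have hwu : w' - u' = -(ρ⁻¹ • (l' - l)) := by
    rw [hupd, add_sub_cancel_left, smul_smul, inv_mul_cancel₀ hρ.ne', one_smul, neg_sub]
  have hw : w' - wstar = (u' - wstar) - ρ⁻¹ • (l' - l) := by
    rw [← sub_add_sub_cancel w' u' wstar, hwu]; abel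
  have hl := two_mul_real_inner_sub_sub l' l lstar
  have hu := two_mul_real_inner_sub_sub u' u wstar
  -- Young's inequality absorbs the cross term left over by the two polarization identities.
  have hyoung := two_mul_real_inner_le hρ (u' - u) (l' - l)
  rw [hwu, hw, inner_neg_right, real_inner_smul_right, inner_sub_right (u' - u),
    real_inner_smul_right, real_inner_comm (u' - wstar)]
  have hρρ : ρ * ρ⁻¹ = 1 := mul_inv_cancel₀ hρ.ne'
  linear_combination (-ρ⁻¹) * hl - ρ * hu + hyoung + 2 * ⟪u' - u, l' - l⟫ * hρρ

theorem admm_client_step_le {σ ρ c : ℝ} (hσ : 0 < σ) (hρ : 0 < ρ) {F : E → E}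
    (hF : StronglyMonotoneWith σ F) {l l' lstar u u' w' wstar : E}
    (hKKT : F wstar + lstar = 0) (hupd : l' = l + ρ • (u' - w')) (herr : ‖F u' + l'‖ ≤ c) :
    σ * ‖u' - wstar‖ ^ 2 + 2 * (⟪l' - lstar, w' - wstar⟫ - ρ * ⟪u' - u, w' - wstar⟫) ≤
      c ^ 2 / σ + (ρ⁻¹ * ‖l - lstar‖ ^ 2 + ρ * ‖u - wstar‖ ^ 2) -
        (ρ⁻¹ * ‖l' - lstar‖ ^ 2 + ρ * ‖u' - wstar‖ ^ 2) := by
  have hmono := hF u' wstar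
  rw [show F u' - F wstar = (F u' + l') - (l' - lstar) by
    rw [eq_neg_of_add_eq_zero_left hKKT]; abel, inner_sub_left] at hmono
  have hsplit : ⟪l' - lstar, u' - wstar⟫ = ⟪l' - lstar, w' - wstar⟫ - ⟪l' - lstar, w' - u'⟫ := by
    rw [← inner_sub_right, sub_sub_sub_cancel_left]
  have herr' := two_mul_real_inner_le_of_norm_le hσ herr (u' - wstar)
  have hdual := admm_dual_step_le (lstar := lstar) (u := u) (wstar := wstar) hρ hupd
  linarith

theorem admm_server_step_le {σ c : ℝ} (hσ : 0 < σ) {F : E → E}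
    (hF : StronglyMonotoneWith σ F) {f : E → ℝ} {g gstar w' wstar : E}
    (hsub : IsSubgradientAt f g w') (hsubstar : IsSubgradientAt f gstar wstar)
    {ρ : ι → ℝ} {lstar l' u u' : ι → E} (hKKT : F wstar + gstar - ∑ i, lstar i = 0)
    (herr : ‖F w' + g + ∑ i, (ρ i • (u' i - u i) - l' i)‖ ≤ c) :
    σ * ‖w' - wstar‖ ^ 2 ≤
      c ^ 2 / σ + 2 * ∑ i, (⟪l' i - lstar i, w' - wstar⟫ - ρ i * ⟪u' i - u i, w' - wstar⟫) := by
  set e := F w' + g + ∑ i, (ρ i • (u' i - u i) - l' i)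
  have hdiff : F w' - F wstar = e - (g - gstar) + ∑ i, ((l' i - lstar i) - ρ i • (u' i - u i)) := by
    rw [show F wstar = ∑ i, lstar i - gstar by linear_combination (norm := module) hKKT]
    simp only [e, sum_sub_distrib]
    abel
  have hmono := hF w' wstar
  rw [hdiff, inner_add_left, inner_sub_left, sum_inner] at hmono
  simp only [inner_sub_left (l' _ - lstar _), real_inner_smul_left] at hmono
  have hsg := hsub.inner_sub_nonneg hsubstar
  have herr' := two_mul_real_inner_le_of_norm_le hσ herr (w' - wstar)
  linarith

theorem admmLyapunov_step_le {σ c : ℝ} (hσ : 0 < σ) {ρ : ι → ℝ} (hρ : ∀ i, 0 < ρ i)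
    {F₀ : E → E} {F : ι → E → E} (hF₀ : StronglyMonotoneWith σ F₀)
    (hF : ∀ i, StronglyMonotoneWith σ (F i)) {f : E → ℝ} {g gstar w' wstar : E}
    (hsub : IsSubgradientAt f g w') (hsubstar : IsSubgradientAt f gstar wstar)
    {lstar l l' u u' : ι → E} (hKKT₁ : ∀ i, F i wstar + lstar i = 0)
    (hKKT₂ : F₀ wstar + gstar - ∑ i, lstar i = 0) (hupd : ∀ i, l' i = l i + ρ i • (u' i - w'))
    (hserver : ‖F₀ w' + g + ∑ i, (ρ i • (u' i - u i) - l' i)‖ ≤ c)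
    (hclient : ∀ i, ‖F i (u' i) + l' i‖ ≤ c) :
    σ * (‖w' - wstar‖ ^ 2 + ∑ i, ‖u' i - wstar‖ ^ 2) + admmLyapunov ρ lstar wstar l' u' ≤
      (Fintype.card ι + 1) * c ^ 2 / σ + admmLyapunov ρ lstar wstar l u := by
  have hs := admm_server_step_le hσ hF₀ hsub hsubstar hKKT₂ hserver
  have hc := sum_le_sum fun i (_ : i ∈ univ) =>
    admm_client_step_le (u := u i) hσ (hρ i) (hF i) (hKKT₁ i) (hupd i) (hclient i)
  simp only [sum_add_distrib, sum_sub_distrib, ← mul_sum, sum_const, card_univ,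
    nsmul_eq_mul] at hc
  have hconst : (Fintype.card ι + 1) * c ^ 2 / σ = Fintype.card ι * (c ^ 2 / σ) + c ^ 2 / σ := by
    ring
  rw [hconst, mul_add]
  simp only [admmLyapunov, sum_add_distrib, sum_sub_distrib] at hs ⊢
  linarith

end Admm

theorem le_div_one_sub_add_of_step_le {b V : ℕ → ℝ} {C r : ℝ} (hC : 0 ≤ C) (hr₀ : 0 ≤ r)
    (hr₁ : r < 1) (hb : ∀ s, 0 ≤ b s) (hV : ∀ s, 0 ≤ V s)
    (hstep : ∀ s, b s + V (s + 1) ≤ C * r ^ s + V s) (t : ℕ) :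
    b t ≤ C / (1 - r) + V 0 := by
  have hV_le : ∀ s, V s ≤ C * ∑ k ∈ range s, r ^ k + V 0 := by
    intro s
    induction s with
    | zero => simp
    | succ s ih =>
      rw [sum_range_succ, mul_add]
      linarith [hstep s, hb s]
  have hgeom : ∑ k ∈ range (t + 1), r ^ k ≤ 1 / (1 - r) := by
    simpa [← range_eq_Ico] using geom_sum_Ico_le_of_lt_one (m := 0) (n := t + 1) hr₀ hr₁
  calc b t ≤ C * ∑ k ∈ range (t + 1), r ^ k + V 0 := by
        rw [sum_range_succ, mul_add]
        linarith [hstep t, hV_le t, hV (t + 1)]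
    _ ≤ C * (1 / (1 - r)) + V 0 := by gcongr
    _ = C / (1 - r) + V 0 := by rw [mul_one_div]

theorem stmt_11_general {d : ℕ} (n : ℕ) (σ q : ℝ) (hσ : 0 < σ)
    (hq0 : 0 < q) (hq1 : q < 1)
    (P0' : EuclideanSpace ℝ (Fin d) → EuclideanSpace ℝ (Fin d))
    (P' : Fin n → EuclideanSpace ℝ (Fin d) → EuclideanSpace ℝ (Fin d))
    (hmono0 : ∀ x y, σ * ‖x - y‖ ^ 2 ≤ ⟪P0' x - P0' y, x - y⟫)
    (hmono : ∀ i, ∀ x y, σ * ‖x - y‖ ^ 2 ≤ ⟪P' i x - P' i y, x - y⟫)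
    (h : EuclideanSpace ℝ (Fin d) → ℝ)
    (ρ : Fin n → ℝ) (hρ : ∀ i, 0 < ρ i)
    -- KKT point
    (wstar : EuclideanSpace ℝ (Fin d)) (lamstar : Fin n → EuclideanSpace ℝ (Fin d))
    (hstar : EuclideanSpace ℝ (Fin d))
    (hsubstar : ∀ y, h wstar + ⟪hstar, y - wstar⟫ ≤ h y)
    (hKKT1 : ∀ i, P' i wstar + lamstar i = 0)
    (hKKT2 : P0' wstar + hstar - ∑ i, lamstar i = 0)
    -- ADMM iterate conditions with initial point w̃⁰ and tolerances q^t
    (w0 : EuclideanSpace ℝ (Fin d))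
    (w : ℕ → EuclideanSpace ℝ (Fin d)) (u lam : Fin n → ℕ → EuclideanSpace ℝ (Fin d))
    (hinit_u : ∀ i, u i 0 = w0) (hinit_lam : ∀ i, lam i 0 = -P' i w0)
    (hlam : ∀ i, ∀ t : ℕ, lam i (t + 1) = lam i t + ρ i • (u i (t + 1) - w (t + 1)))
    (hserver : ∀ t : ℕ, ∃ ht1 : EuclideanSpace ℝ (Fin d),
      (∀ y, h (w (t + 1)) + ⟪ht1, y - w (t + 1)⟫ ≤ h y) ∧
      ‖P0' (w (t + 1)) + ht1 +
        ∑ i, (ρ i • (u i (t + 1) - u i t) - lam i (t + 1))‖ ≤ q ^ t)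
    (hclient : ∀ i, ∀ t : ℕ, ‖P' i (u i (t + 1)) + lam i (t + 1)‖ ≤ q ^ t) :
    ∀ t : ℕ, ∀ i : Fin n,
      ‖w (t + 1) - wstar‖ ^ 2 ≤
          ((n : ℝ) + 1) / (σ ^ 2 * (1 - q ^ 2)) +
            (1 / σ) * ∑ i, (ρ i * ‖wstar - w0‖ ^ 2 +
              (1 / ρ i) * ‖P' i wstar - P' i w0‖ ^ 2) ∧
      ‖u i (t + 1) - wstar‖ ^ 2 ≤
          ((n : ℝ) + 1) / (σ ^ 2 * (1 - q ^ 2)) +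
            (1 / σ) * ∑ i, (ρ i * ‖wstar - w0‖ ^ 2 +
              (1 / ρ i) * ‖P' i wstar - P' i w0‖ ^ 2) := by
  intro t i
  set V : ℕ → ℝ := fun s => admmLyapunov ρ lamstar wstar (fun j => lam j s) (fun j => u j s)
  have hstep : ∀ s, σ * (‖w (s + 1) - wstar‖ ^ 2 + ∑ j, ‖u j (s + 1) - wstar‖ ^ 2) + V (s + 1) ≤
      ((n + 1) / σ) * (q ^ 2) ^ s + V s := by
    intro s
    obtain ⟨g, hsub, hres⟩ := hserver s
    calc _ ≤ (Fintype.card (Fin n) + 1) * (q ^ s) ^ 2 / σ + V s :=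
          admmLyapunov_step_le hσ hρ hmono0 hmono hsub hsubstar hKKT1 hKKT2
            (fun j => hlam j s) hres fun j => hclient j s
      _ = _ := by rw [Fintype.card_fin]; ring
  have hV0 : V 0 = ∑ j, (ρ j * ‖wstar - w0‖ ^ 2 + (1 / ρ j) * ‖P' j wstar - P' j w0‖ ^ 2) := by
    refine sum_congr rfl fun j _ => ?_
    dsimp only
    rw [hinit_u, hinit_lam, eq_neg_of_add_eq_zero_right (hKKT1 j), neg_sub_neg, norm_sub_rev w0,
      one_div, add_comm]
  have hq2 : q ^ 2 < 1 := by nlinarith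
  have hbound := le_div_one_sub_add_of_step_le
    (b := fun s => σ * (‖w (s + 1) - wstar‖ ^ 2 + ∑ j, ‖u j (s + 1) - wstar‖ ^ 2)) (V := V)
    (C := (n + 1) / σ) (by positivity) (sq_nonneg q) hq2
    (fun s => by positivity) (fun s => admmLyapunov_nonneg (fun j => (hρ j).le) _ _ _ _) hstep t
  have htotal : ‖w (t + 1) - wstar‖ ^ 2 + ∑ j, ‖u j (t + 1) - wstar‖ ^ 2 ≤
      ((n : ℝ) + 1) / (σ ^ 2 * (1 - q ^ 2)) + (1 / σ) * V 0 := by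
    rw [show ((n : ℝ) + 1) / (σ ^ 2 * (1 - q ^ 2)) + (1 / σ) * V 0 =
        (((n + 1) / σ) / (1 - q ^ 2) + V 0) / σ by field_simp, le_div_iff₀ hσ]
    linarith
  rw [← hV0]
  have hu_le : ‖u i (t + 1) - wstar‖ ^ 2 ≤ ∑ j, ‖u j (t + 1) - wstar‖ ^ 2 :=
    single_le_sum (fun j _ => sq_nonneg ‖u j (t + 1) - wstar‖) (mem_univ i)
  have hsum_nonneg : 0 ≤ ∑ j, ‖u j (t + 1) - wstar‖ ^ 2 := by positivity
  have hw_nonneg : 0 ≤ ‖w (t + 1) - wstar‖ ^ 2 := sq_nonneg _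
  constructor <;> linarith

/-- Lemma 4.2 (bounded iterates of the inexact ADMM): under the ADMM iterate
conditions with initial point `w̃⁰` and tolerances `q^t`, for every `t` and `i`,
both `‖w^{t+1} − w̃*‖²` and `‖u_i^{t+1} − w̃*‖²` are at most
`(n+1)/(σ²(1−q²)) + (1/σ) Σ_i (ρ_i‖w̃* − w̃⁰‖² + (1/ρ_i)‖∇P_i(w̃*) − ∇P_i(w̃⁰)‖²)`. -/
theorem stmt_11 {d : ℕ} (n : ℕ) (hn : 1 ≤ n) (σ q : ℝ) (hσ : 0 < σ)
    (hq0 : 0 < q) (hq1 : q < 1)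
    (P0 : EuclideanSpace ℝ (Fin d) → ℝ) (P0' : EuclideanSpace ℝ (Fin d) → EuclideanSpace ℝ (Fin d))
    (hP0 : ∀ x, HasGradientAt P0 (P0' x) x)
    (P : Fin n → EuclideanSpace ℝ (Fin d) → ℝ)
    (P' : Fin n → EuclideanSpace ℝ (Fin d) → EuclideanSpace ℝ (Fin d))
    (hP : ∀ i x, HasGradientAt (P i) (P' i x) x)
    (hmono0 : ∀ x y, σ * ‖x - y‖ ^ 2 ≤ ⟪P0' x - P0' y, x - y⟫)
    (hmono : ∀ i, ∀ x y, σ * ‖x - y‖ ^ 2 ≤ ⟪P' i x - P' i y, x - y⟫)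
    (h : EuclideanSpace ℝ (Fin d) → ℝ) (hh : ConvexOn ℝ Set.univ h)
    (ρ : Fin n → ℝ) (hρ : ∀ i, 0 < ρ i)
    -- KKT point
    (wstar : EuclideanSpace ℝ (Fin d)) (lamstar : Fin n → EuclideanSpace ℝ (Fin d))
    (hstar : EuclideanSpace ℝ (Fin d))
    (hsubstar : ∀ y, h wstar + ⟪hstar, y - wstar⟫ ≤ h y)
    (hKKT1 : ∀ i, P' i wstar + lamstar i = 0)
    (hKKT2 : P0' wstar + hstar - ∑ i, lamstar i = 0)
    -- ADMM iterate conditions with initial point w̃⁰ and tolerances q^t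
    (w0 : EuclideanSpace ℝ (Fin d))
    (w : ℕ → EuclideanSpace ℝ (Fin d)) (u lam : Fin n → ℕ → EuclideanSpace ℝ (Fin d))
    (hinit_u : ∀ i, u i 0 = w0) (hinit_lam : ∀ i, lam i 0 = -P' i w0)
    (hlam : ∀ i, ∀ t : ℕ, lam i (t + 1) = lam i t + ρ i • (u i (t + 1) - w (t + 1)))
    (hserver : ∀ t : ℕ, ∃ ht1 : EuclideanSpace ℝ (Fin d),
      (∀ y, h (w (t + 1)) + ⟪ht1, y - w (t + 1)⟫ ≤ h y) ∧
      ‖P0' (w (t + 1)) + ht1 +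
        ∑ i, (ρ i • (u i (t + 1) - u i t) - lam i (t + 1))‖ ≤ q ^ t)
    (hclient : ∀ i, ∀ t : ℕ, ‖P' i (u i (t + 1)) + lam i (t + 1)‖ ≤ q ^ t) :
    ∀ t : ℕ, ∀ i : Fin n,
      ‖w (t + 1) - wstar‖ ^ 2 ≤
          ((n : ℝ) + 1) / (σ ^ 2 * (1 - q ^ 2)) +
            (1 / σ) * ∑ i, (ρ i * ‖wstar - w0‖ ^ 2 +
              (1 / ρ i) * ‖P' i wstar - P' i w0‖ ^ 2) ∧
      ‖u i (t + 1) - wstar‖ ^ 2 ≤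
          ((n : ℝ) + 1) / (σ ^ 2 * (1 - q ^ 2)) +
            (1 / σ) * ∑ i, (ρ i * ‖wstar - w0‖ ^ 2 +
              (1 / ρ i) * ‖P' i wstar - P' i w0‖ ^ 2) :=
  stmt_11_general n σ q hσ hq0 hq1 P0' P' hmono0 hmono h ρ hρ wstar lamstar hstar hsubstar hKKT1
    hKKT2 w0 w u lam hinit_u hinit_lam hlam hserver hclient
end

section
/- Let d ≥ 1, let β > 0, n ≥ 1 a natural number, μ_0 ≥ 0 a real number, and w̄ ∈ ℝ^d. Then the map G : ℝ^d → ℝ^d defined by G(w) = 2·max(μ_0 + β·(‖w‖² − 1), 0)·w + (w − w̄)/((n+1)β) is not Lipschitz continuous on ℝ^d; that is, there is no constant K ≥ 0 with ‖G(u) − G(v)‖ ≤ K‖u − v‖ for all u, v ∈ ℝ^d. -/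
/-!
The nonlinear part `2 max(μ₀ + β(‖w‖² − 1), 0) • w` of `G` is a radial scaling whose factor
grows like `2β‖w‖²`, so its difference quotients against `0` are unbounded, while the remaining
affine part `w ↦ (w − w̄)/((n+1)β)` is Lipschitz.
-/

open Filter

theorem not_exists_bound_radial_scaling {E : Type*} [NormedAddCommGroup E] [NormedSpace ℝ E]
    [Nontrivial E] {φ : ℝ → ℝ} (hφ : Tendsto φ atTop atTop) :
    ¬ ∃ K : ℝ, ∀ u v : E, ‖φ ‖u‖ • u - φ ‖v‖ • v‖ ≤ K * ‖u - v‖ := by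
  rintro ⟨K, hK⟩
  obtain ⟨r, hKr, hr⟩ := ((hφ.eventually_gt_atTop K).and (eventually_gt_atTop 0)).exists
  obtain ⟨u, hu⟩ := exists_norm_eq E hr.le
  have hbound := hK u 0
  rw [norm_zero, smul_zero, sub_zero, sub_zero, norm_smul, hu, Real.norm_eq_abs] at hbound
  have : |φ r| ≤ K := le_of_mul_le_mul_right hbound hr
  linarith [le_abs_self (φ r)]

theorem tendsto_two_mul_max_add_mul_sq_sub_one_atTop (μ : ℝ) {β : ℝ} (hβ : 0 < β) :
    Tendsto (fun r : ℝ => 2 * max (μ + β * (r ^ 2 - 1)) 0) atTop atTop := by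
  have hsq : Tendsto (fun r : ℝ => μ + β * (r ^ 2 - 1)) atTop atTop :=
    tendsto_atTop_add_const_left _ μ <| (tendsto_atTop_add_const_right _ (-1)
      (tendsto_pow_atTop two_ne_zero)).const_mul_atTop hβ
  exact (tendsto_atTop_mono (fun _ => le_max_left _ _) hsq).const_mul_atTop two_pos

theorem stmt_16_general (d : ℕ) (hd : 1 ≤ d) (β : ℝ) (hβ : 0 < β) (n : ℕ)
    (μ0 : ℝ) (wbar : EuclideanSpace ℝ (Fin d))
    (G : EuclideanSpace ℝ (Fin d) → EuclideanSpace ℝ (Fin d))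
    (hG : ∀ w, G w = (2 * max (μ0 + β * (‖w‖ ^ 2 - 1)) 0) • w +
      (((n : ℝ) + 1) * β)⁻¹ • (w - wbar)) :
    ¬ ∃ K : ℝ, 0 ≤ K ∧ ∀ u v : EuclideanSpace ℝ (Fin d), ‖G u - G v‖ ≤ K * ‖u - v‖ := by
  rintro ⟨K, -, hK⟩
  have : Nonempty (Fin d) := ⟨⟨0, hd⟩⟩
  set c : ℝ := (((n : ℝ) + 1) * β)⁻¹
  refine not_exists_bound_radial_scaling (E := EuclideanSpace ℝ (Fin d))
    (tendsto_two_mul_max_add_mul_sq_sub_one_atTop μ0 hβ) ⟨K + ‖c‖, fun u v => ?_⟩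
  have hsplit : (2 * max (μ0 + β * (‖u‖ ^ 2 - 1)) 0) • u
      - (2 * max (μ0 + β * (‖v‖ ^ 2 - 1)) 0) • v = (G u - G v) - c • (u - v) := by
    rw [hG, hG]; module
  calc _ = ‖(G u - G v) - c • (u - v)‖ := by rw [hsplit]
    _ ≤ ‖G u - G v‖ + ‖c • (u - v)‖ := norm_sub_le _ _
    _ ≤ K * ‖u - v‖ + ‖c‖ * ‖u - v‖ := by rw [norm_smul]; gcongr; exact hK u v
    _ = (K + ‖c‖) * ‖u - v‖ := by ring

/-- Remark 4.1: for `c₀(w) = ‖w‖² − 1`, the gradient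
`G(w) = 2 max(μ₀ + β(‖w‖² − 1), 0) w + (w − w̄)/((n+1)β)` of the
augmented-Lagrangian merit function is not (globally) Lipschitz on `ℝ^d`. -/
theorem stmt_16 (d : ℕ) (hd : 1 ≤ d) (β : ℝ) (hβ : 0 < β) (n : ℕ) (hn : 1 ≤ n)
    (μ0 : ℝ) (hμ0 : 0 ≤ μ0) (wbar : EuclideanSpace ℝ (Fin d))
    (G : EuclideanSpace ℝ (Fin d) → EuclideanSpace ℝ (Fin d))
    (hG : ∀ w, G w = (2 * max (μ0 + β * (‖w‖ ^ 2 - 1)) 0) • w +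
      (((n : ℝ) + 1) * β)⁻¹ • (w - wbar)) :
    ¬ ∃ K : ℝ, 0 ≤ K ∧ ∀ u v : EuclideanSpace ℝ (Fin d), ‖G u - G v‖ ≤ K * ‖u - v‖ :=
  stmt_16_general d hd β hβ n μ0 wbar G hG
end
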